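/- arXiv:1610.03999 — 2 statements merged into one kernel-verified Lean document; each statement's English description precedes it below -/
import Mathlib

section
/- Let k ≥ 1 and let p, q, r be integers with 1 ≤ p, q, r ≤ k and p + q + r even. Then the graph T_{2k+1}(p,q,r) has odd-girth at least 2k+1 if and only if p, q, r satisfy the triangular inequalities p ≤ q + r, q ≤ p + r, and r ≤ p + q. -/
open SimpleGraph

/-- `G` has odd-girth at least `n`: every odd cycle has length at least `n`. -/
def oddGirthAtLeast {V : Type*} (G : SimpleGraph V) (n : ℕ) : Prop :=
  ∀ (x : V) (w : G.Walk x x), w.IsCycle → Odd w.length → n ≤ w.length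

/-- The lengths of the six paths of `T_{2k+1}(p,q,r)`. -/
def pathLen (k p q r : ℕ) : Fin 6 → ℕ :=
  ![p, 2*k+1-p, q, 2*k+1-q, r, 2*k+1-r]

/-- The endpoints (among `u,v,w`, numbered `0,1,2`) of the six paths:
paths `0,1` join `u,v`, paths `2,3` join `u,w`, paths `4,5` join `v,w`. -/
def pathEnds : Fin 6 → Fin 3 × Fin 3 :=
  ![(0,1), (0,1), (0,2), (0,2), (1,2), (1,2)]

/-- Vertices of `T_{2k+1}(p,q,r)`: the three main vertices `u,v,w` together with
the internal vertices of the six paths (a path of length `L` has `L-1` internal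
vertices). -/
def TVert (k p q r : ℕ) : Type :=
  Fin 3 ⊕ Σ i : Fin 6, Fin (pathLen k p q r i - 1)

/-- Base adjacency relation for `T_{2k+1}(p,q,r)`. -/
def TAdjBase (k p q r : ℕ) : TVert k p q r → TVert k p q r → Prop
  | Sum.inl a, Sum.inl b =>
      ∃ i, pathLen k p q r i = 1 ∧ pathEnds i = (a, b)
  | Sum.inl a, Sum.inr ⟨i, j⟩ =>
      ((j : ℕ) = 0 ∧ (pathEnds i).1 = a) ∨
      ((j : ℕ) + 2 = pathLen k p q r i ∧ (pathEnds i).2 = a)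
  | Sum.inr ⟨i, j⟩, Sum.inr ⟨i', j'⟩ =>
      ∃ _ : i = i', (j' : ℕ) = (j : ℕ) + 1
  | _, _ => False

/-- The graph `T_{2k+1}(p,q,r)`: three vertices `u,v,w`, with `u,v` joined by two
internally disjoint paths of lengths `p` and `2k+1-p`, `u,w` by paths of lengths
`q` and `2k+1-q`, and `v,w` by paths of lengths `r` and `2k+1-r`. -/
def TGraph (k p q r : ℕ) : SimpleGraph (TVert k p q r) :=
  SimpleGraph.fromRel (TAdjBase k p q r)

/-!
Every edge of `T_{2k+1}(p,q,r)` lies on exactly one of the six paths, and the internal vertices of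
the paths have degree two, so a closed trail uses all edges of a path or none. Its length is
therefore the total length of a set of paths meeting each of `u, v, w` an even number of times.
Such a set is empty, contains two parallel paths (of total length `2k+1`), or is a triangle with one
path between each pair. A triangle of short paths has the even length `p + q + r`, one with two
long paths is longer than `2k+1`, and the triangle `2k+1-p, q, r` has the odd length
`2k+1-p+q+r`, which is at least `2k+1` exactly when `p ≤ q + r`. Conversely, each triangle of
paths is a cycle of the graph.
-/

namespace SimpleGraph.Walk

variable {V : Type*} {G : SimpleGraph V} {u v w : V}

lemma IsPath.start_notMem_support_tail {p : G.Walk u v} (hp : p.IsPath) :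
    u ∉ p.support.tail := by
  have := hp.support_nodup
  rw [← cons_tail_support] at this
  exact (List.nodup_cons.1 this).1

lemma IsPath.append_of_support_inter {p : G.Walk u v} {q : G.Walk v w} (hp : p.IsPath)
    (hq : q.IsPath) (h : ∀ x ∈ p.support, x ∈ q.support → x = v) : (p.append q).IsPath := by
  rw [isPath_def, support_append, List.nodup_append]
  refine ⟨hp.support_nodup, hq.support_nodup.tail, fun x hx y hy hxy => ?_⟩
  subst hxy
  exact hq.start_notMem_support_tail (h x hx (List.mem_of_mem_tail hy) ▸ hy)

lemma IsPath.isCycle_append_of_support_inter {p : G.Walk u v} {q : G.Walk v u}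
    (hp : p.IsPath) (hq : q.IsPath) (h : ∀ x ∈ p.support, x ∈ q.support → x = u ∨ x = v)
    (hn : 1 < p.length ∨ 1 < q.length) : (p.append q).IsCycle := by
  refine hp.isCycle_append hq (fun x hxp hxq => ?_) hn
  rcases h x (List.mem_of_mem_tail hxp) (List.mem_of_mem_tail hxq) with rfl | rfl
  · exact hp.start_notMem_support_tail hxp
  · exact hq.start_notMem_support_tail hxq

lemma IsTrail.mem_edges_iff_of_incident {c : G.Walk u u} (hc : c.IsTrail) {x : V}
    {e e' : Sym2 V} (hne : e ≠ e') (hxe : x ∈ e) (hxe' : x ∈ e')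
    (hinc : ∀ f ∈ c.edges, x ∈ f → f = e ∨ f = e') : e ∈ c.edges ↔ e' ∈ c.edges := by
  classical
  have hfilter : c.edges.toFinset.filter (x ∈ ·) = ({e, e'} : Finset _).filter (· ∈ c.edges) := by
    ext f
    simp only [Finset.mem_filter, List.mem_toFinset, Finset.mem_insert, Finset.mem_singleton]
    constructor
    · rintro ⟨hf, hxf⟩
      exact ⟨hinc f hf hxf, hf⟩
    · rintro ⟨rfl | rfl, hf⟩
      exacts [⟨hf, hxe⟩, ⟨hf, hxe'⟩]
  have heven := (hc.even_countP_edges_iff x).2 (absurd rfl)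
  rw [← hc.edges_nodup.card_eq_countP, hfilter, Finset.filter_insert,
    Finset.filter_singleton] at heven
  by_cases he : e ∈ c.edges <;> by_cases he' : e' ∈ c.edges <;>
    simp_all [Finset.card_insert_of_notMem]

end SimpleGraph.Walk

namespace TGraph

variable {k p q r : ℕ} {i j l : Fin 6} {s t : ℕ}

instance : DecidableEq (TVert k p q r) :=
  inferInstanceAs (DecidableEq (Fin 3 ⊕ Σ i : Fin 6, Fin (pathLen k p q r i - 1)))

structure Admissible (k p q r : ℕ) : Prop where
  one_le_p : 1 ≤ p
  p_le : p ≤ k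
  one_le_q : 1 ≤ q
  q_le : q ≤ k
  one_le_r : 1 ≤ r
  r_le : r ≤ k

lemma Admissible.one_le_pathLen (hT : Admissible k p q r) (i : Fin 6) :
    1 ≤ pathLen k p q r i := by
  obtain ⟨_, _, _, _, _, _⟩ := hT
  fin_cases i <;> simp [pathLen] <;> omega

/-- Two parallel paths have lengths adding up to `2k+1 ≥ 3`, so they are not both edges. -/
lemma Admissible.eq_of_pathLen_eq_one (hT : Admissible k p q r) {i j : Fin 6}
    (hi : pathLen k p q r i = 1) (hj : pathLen k p q r j = 1)
    (hends : s((pathEnds i).1, (pathEnds i).2) = s((pathEnds j).1, (pathEnds j).2)) : i = j := by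
  obtain ⟨_, _, _, _, _, _⟩ := hT
  fin_cases i <;> fin_cases j <;> simp [pathLen, pathEnds] at hi hj hends ⊢ <;>
    omega

lemma pathEnds_fst_ne_snd (i : Fin 6) : (pathEnds i).1 ≠ (pathEnds i).2 := by
  fin_cases i <;> decide

def branchVertex (k p q r : ℕ) (a : Fin 3) : TVert k p q r := Sum.inl a

lemma branchVertex_injective : Function.Injective (branchVertex k p q r) :=
  Sum.inl_injective

@[simp]
lemma branchVertex_inj {a b : Fin 3} : branchVertex k p q r a = branchVertex k p q r b ↔ a = b :=
  branchVertex_injective.eq_iff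

@[simp]
lemma branchVertex_ne_inr {a : Fin 3} {y : Σ i : Fin 6, Fin (pathLen k p q r i - 1)} :
    branchVertex k p q r a ≠ Sum.inr y :=
  Sum.inl_ne_inr

/-- The `t`-th vertex of the `i`-th path; for `t` beyond the length of the path it is the far
end. -/
def pathVertex (k p q r : ℕ) (i : Fin 6) (t : ℕ) : TVert k p q r :=
  if h : 0 < t ∧ t < pathLen k p q r i then Sum.inr ⟨i, ⟨t - 1, by omega⟩⟩
  else if t = 0 then branchVertex k p q r (pathEnds i).1 else branchVertex k p q r (pathEnds i).2

@[simp]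
lemma pathVertex_zero : pathVertex k p q r i 0 = branchVertex k p q r (pathEnds i).1 := by
  simp [pathVertex]

lemma pathVertex_of_le (ht : 0 < t) (hLt : pathLen k p q r i ≤ t) :
    pathVertex k p q r i t = branchVertex k p q r (pathEnds i).2 := by
  simp [pathVertex, hLt.not_gt, ht.ne']

lemma pathVertex_of_lt (ht : 0 < t) (htL : t < pathLen k p q r i) :
    pathVertex k p q r i t = Sum.inr ⟨i, ⟨t - 1, by omega⟩⟩ := by
  simp [pathVertex, htL, ht]
  rfl

lemma inr_eq_pathVertex (x : Fin (pathLen k p q r i - 1)) :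
    Sum.inr ⟨i, x⟩ = pathVertex k p q r i (x + 1) := by
  rw [pathVertex_of_lt (by omega) (by omega)]
  rfl

def innerPath : TVert k p q r → Option (Fin 6)
  | Sum.inl _ => none
  | Sum.inr ⟨i, _⟩ => some i

@[simp]
lemma innerPath_branchVertex (a : Fin 3) : innerPath (branchVertex k p q r a) = none :=
  rfl

lemma innerPath_pathVertex (ht : 0 < t) (htL : t < pathLen k p q r i) :
    innerPath (pathVertex k p q r i t) = some i := by
  rw [pathVertex_of_lt ht htL]
  rfl

lemma pathVertex_cases (i : Fin 6) (t : ℕ) :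
    pathVertex k p q r i t = branchVertex k p q r (pathEnds i).1 ∨
      pathVertex k p q r i t = branchVertex k p q r (pathEnds i).2 ∨
      innerPath (pathVertex k p q r i t) = some i := by
  by_cases ht : 0 < t ∧ t < pathLen k p q r i
  · exact Or.inr (Or.inr (innerPath_pathVertex ht.1 ht.2))
  rcases Nat.eq_zero_or_pos t with rfl | ht0
  · exact Or.inl pathVertex_zero
  · exact Or.inr (Or.inl (pathVertex_of_le ht0 (by omega)))

lemma pathVertex_ne_pathVertex (hij : i ≠ j) (ht : 0 < t) (htL : t < pathLen k p q r i)
    (s : ℕ) : pathVertex k p q r i t ≠ pathVertex k p q r j s := by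
  intro h
  have hi : innerPath (pathVertex k p q r i t) = some i := innerPath_pathVertex ht htL
  rcases pathVertex_cases (k := k) (p := p) (q := q) (r := r) j s with h' | h' | h' <;>
    simp_all

def pathPos (i : Fin 6) : TVert k p q r → ℕ
  | Sum.inl a => if a = (pathEnds i).1 then 0 else pathLen k p q r i
  | Sum.inr ⟨_, x⟩ => x + 1

lemma pathPos_pathVertex (ht : t ≤ pathLen k p q r i) :
    pathPos i (pathVertex k p q r i t) = t := by
  rcases Nat.eq_zero_or_pos t with rfl | ht0
  · simp [pathPos, branchVertex]
  rcases ht.lt_or_eq with htL | rfl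
  · rw [pathVertex_of_lt ht0 htL]
    show t - 1 + 1 = t
    omega
  · rw [pathVertex_of_le ht0 le_rfl]
    simp [pathPos, branchVertex, (pathEnds_fst_ne_snd i).symm]

lemma pathVertex_injOn : Set.InjOn (pathVertex k p q r i) (Set.Iic (pathLen k p q r i)) :=
  fun s hs t ht h => by rw [← pathPos_pathVertex hs, h, pathPos_pathVertex ht]

lemma adj_iff {x y : TVert k p q r} :
    (TGraph k p q r).Adj x y ↔ x ≠ y ∧ (TAdjBase k p q r x y ∨ TAdjBase k p q r y x) :=
  Iff.rfl

lemma adj_pathVertex_succ (ht : t < pathLen k p q r i) :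
    (TGraph k p q r).Adj (pathVertex k p q r i t) (pathVertex k p q r i (t + 1)) := by
  rcases Nat.eq_zero_or_pos t with rfl | ht0 <;>
    rcases (Nat.succ_le_of_lt ht).eq_or_lt with hL | hL
  · rw [zero_add, pathVertex_of_le one_pos hL.ge, pathVertex_zero]
    exact adj_iff.2
      ⟨fun h => pathEnds_fst_ne_snd i (branchVertex_injective h), Or.inl ⟨i, hL.symm, rfl⟩⟩
  · rw [zero_add, pathVertex_of_lt one_pos hL, pathVertex_zero]
    exact adj_iff.2 ⟨Sum.inl_ne_inr, Or.inl (Or.inl ⟨rfl, rfl⟩)⟩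
  · rw [pathVertex_of_lt ht0 ht, pathVertex_of_le (by omega) hL.ge]
    exact adj_iff.2 ⟨Sum.inr_ne_inl, Or.inr (Or.inr ⟨by simp only; omega, rfl⟩)⟩
  · rw [pathVertex_of_lt ht0 ht, pathVertex_of_lt (by omega) hL]
    refine adj_iff.2 ⟨fun h => ?_, Or.inl ⟨rfl, by simp only; omega⟩⟩
    have := congrArg (pathPos i) h
    simp only [pathPos] at this
    omega

lemma eq_pathVertex_of_adj_inr {x : Fin (pathLen k p q r i - 1)} {y : TVert k p q r}
    (h : (TGraph k p q r).Adj (Sum.inr ⟨i, x⟩) y) :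
    y = pathVertex k p q r i x ∨ y = pathVertex k p q r i (x + 2) := by
  obtain ⟨-, hb | hb⟩ := adj_iff.1 h
  · match y, hb with
    | Sum.inr ⟨_, x'⟩, ⟨rfl, hx'⟩ => exact Or.inr (by rw [inr_eq_pathVertex, hx'])
  · match y, hb with
    | Sum.inl _, Or.inl ⟨hx, rfl⟩ => exact Or.inl (by rw [hx, pathVertex_zero]; rfl)
    | Sum.inl _, Or.inr ⟨hx, rfl⟩ => exact Or.inr (pathVertex_of_le (by omega) hx.ge).symm
    | Sum.inr ⟨_, x'⟩, ⟨rfl, hx'⟩ => exact Or.inl (by rw [inr_eq_pathVertex, ← hx'])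

def pathEdge (k p q r : ℕ) (i : Fin 6) (t : ℕ) : Sym2 (TVert k p q r) :=
  s(pathVertex k p q r i t, pathVertex k p q r i (t + 1))

lemma pathEdge_of_pathLen_eq_one (hL : pathLen k p q r i = 1) :
    pathEdge k p q r i 0 = Sym2.map (branchVertex k p q r) s((pathEnds i).1, (pathEnds i).2) := by
  rw [pathEdge, zero_add, pathVertex_of_le one_pos hL.le, pathVertex_zero]
  rfl

lemma exists_eq_pathEdge_of_adj_inr {x : Fin (pathLen k p q r i - 1)} {y : TVert k p q r}
    (h : (TGraph k p q r).Adj (Sum.inr ⟨i, x⟩) y) :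
    ∃ t < pathLen k p q r i, s(Sum.inr ⟨i, x⟩, y) = pathEdge k p q r i t := by
  have hx := x.isLt
  rw [inr_eq_pathVertex]
  rcases eq_pathVertex_of_adj_inr h with rfl | rfl
  · exact ⟨x, by omega, Sym2.eq_swap⟩
  · exact ⟨x + 1, by omega, rfl⟩

lemma exists_eq_pathEdge {e : Sym2 (TVert k p q r)} (he : e ∈ (TGraph k p q r).edgeSet) :
    ∃ i, ∃ t < pathLen k p q r i, e = pathEdge k p q r i t := by
  induction e using Sym2.ind with | _ x y => ?_
  rw [mem_edgeSet] at he
  match x, y, he with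
  | Sum.inr ⟨i, x⟩, _, he => exact ⟨i, exists_eq_pathEdge_of_adj_inr he⟩
  | Sum.inl _, Sum.inr ⟨i, x⟩, he =>
    obtain ⟨t, ht, h⟩ := exists_eq_pathEdge_of_adj_inr he.symm
    exact ⟨i, t, ht, Sym2.eq_swap.trans h⟩
  | Sum.inl a, Sum.inl b, he =>
    obtain ⟨-, ⟨i, hL, hab⟩ | ⟨i, hL, hab⟩⟩ := adj_iff.1 he
    · refine ⟨i, 0, by omega, ?_⟩
      rw [pathEdge_of_pathLen_eq_one hL, hab]
      rfl
    · refine ⟨i, 0, by omega, ?_⟩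
      rw [pathEdge_of_pathLen_eq_one hL, hab]
      exact Sym2.eq_swap

lemma eq_zero_of_pathVertex_eq (hij : i ≠ j) (htL : t < pathLen k p q r i)
    (h : pathVertex k p q r i t = pathVertex k p q r j s) : t = 0 := by
  by_contra ht
  exact pathVertex_ne_pathVertex hij (by omega) htL s h

lemma pathLen_le_of_pathVertex_eq (hij : i ≠ j) (ht : 0 < t)
    (h : pathVertex k p q r i t = pathVertex k p q r j s) : pathLen k p q r i ≤ t := by
  by_contra htL
  exact pathVertex_ne_pathVertex hij ht (by omega) s h

lemma pathEdge_inj (hT : Admissible k p q r) (ht : t < pathLen k p q r i)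
    (hs : s < pathLen k p q r j) :
    pathEdge k p q r i t = pathEdge k p q r j s ↔ i = j ∧ t = s := by
  refine ⟨fun h => ?_, by rintro ⟨rfl, rfl⟩; rfl⟩
  have hinj : Set.InjOn (pathVertex k p q r i) (Set.Iic (pathLen k p q r i)) := pathVertex_injOn
  by_cases hij : i = j
  · subst hij
    refine ⟨rfl, ?_⟩
    rcases Sym2.eq_iff.1 h with ⟨h1, -⟩ | ⟨h1, h2⟩
    · exact hinj (Set.mem_Iic.2 ht.le) (Set.mem_Iic.2 hs.le) h1
    · have := hinj (Set.mem_Iic.2 ht.le) (Set.mem_Iic.2 hs) h1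
      have := hinj (Set.mem_Iic.2 ht) (Set.mem_Iic.2 hs.le) h2
      omega
  · have hji : j ≠ i := Ne.symm hij
    have key : t = 0 ∧ s = 0 ∧ pathLen k p q r i = 1 ∧ pathLen k p q r j = 1 := by
      rcases Sym2.eq_iff.1 h with ⟨h1, h2⟩ | ⟨h1, h2⟩
      · have := eq_zero_of_pathVertex_eq hij ht h1
        have := eq_zero_of_pathVertex_eq hji hs h1.symm
        have := pathLen_le_of_pathVertex_eq hij (by omega) h2
        have := pathLen_le_of_pathVertex_eq hji (by omega) h2.symm
        omega
      · have := eq_zero_of_pathVertex_eq hij ht h1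
        have := eq_zero_of_pathVertex_eq hji hs h2.symm
        have := pathLen_le_of_pathVertex_eq hij (by omega) h2
        have := pathLen_le_of_pathVertex_eq hji (by omega) h1.symm
        omega
    obtain ⟨rfl, rfl, hLi, hLj⟩ := key
    rw [pathEdge_of_pathLen_eq_one hLi, pathEdge_of_pathLen_eq_one hLj] at h
    exact absurd (hT.eq_of_pathLen_eq_one hLi hLj (Sym2.map.injective branchVertex_injective h)) hij

lemma eq_pathEdge_of_pathVertex_mem (ht : t + 1 < pathLen k p q r i)
    {e : Sym2 (TVert k p q r)} (he : e ∈ (TGraph k p q r).edgeSet)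
    (hv : pathVertex k p q r i (t + 1) ∈ e) :
    e = pathEdge k p q r i t ∨ e = pathEdge k p q r i (t + 1) := by
  obtain ⟨y, rfl⟩ := Sym2.mem_iff_exists.1 hv
  rw [mem_edgeSet, pathVertex_of_lt (by omega) ht] at he
  rcases eq_pathVertex_of_adj_inr he with rfl | rfl
  · left
    rw [pathEdge, Sym2.eq_swap, pathVertex_of_lt (i := i) (t := t + 1) (by omega) ht]
    rfl
  · right
    rw [pathEdge, pathVertex_of_lt (i := i) (t := t + 1) (by omega) ht]
    rfl

lemma branchVertex_mem_pathEdge_iff {a : Fin 3} (ht : t < pathLen k p q r i) :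
    branchVertex k p q r a ∈ pathEdge k p q r i t ↔
      (t = 0 ∧ a = (pathEnds i).1) ∨ (t + 1 = pathLen k p q r i ∧ a = (pathEnds i).2) := by
  refine Sym2.mem_iff.trans ?_
  rcases (Nat.succ_le_of_lt ht).eq_or_lt with hL | hL <;>
    rcases Nat.eq_zero_or_pos t with rfl | ht0
  · rw [pathVertex_of_le (t := 0 + 1) (by omega) hL.ge, pathVertex_zero]
    simp [← hL]
  · rw [pathVertex_of_le (t := t + 1) (by omega) hL.ge, pathVertex_of_lt ht0 ht]
    simp [← hL, ht0.ne']
  · rw [pathVertex_of_lt (by omega) hL, pathVertex_zero]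
    simp [hL.ne]
  · rw [pathVertex_of_lt (by omega) hL, pathVertex_of_lt ht0 ht]
    simp [hL.ne, ht0.ne']

def pathEdges (k p q r : ℕ) (i : Fin 6) : Finset (Sym2 (TVert k p q r)) :=
  (Finset.range (pathLen k p q r i)).image (pathEdge k p q r i)

lemma pathEdge_injOn (hT : Admissible k p q r) (i : Fin 6) :
    Set.InjOn (pathEdge k p q r i) (Finset.range (pathLen k p q r i)) :=
  fun _ hs _ ht h => ((pathEdge_inj hT (Finset.mem_range.1 hs) (Finset.mem_range.1 ht)).1 h).2

lemma card_pathEdges (hT : Admissible k p q r) (i : Fin 6) :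
    (pathEdges k p q r i).card = pathLen k p q r i := by
  rw [pathEdges, Finset.card_image_of_injOn (pathEdge_injOn hT i), Finset.card_range]

lemma pairwiseDisjoint_pathEdges (hT : Admissible k p q r) (S : Set (Fin 6)) :
    S.PairwiseDisjoint (pathEdges k p q r) := by
  intro i _ j _ hij
  simp only [Function.onFun, pathEdges, Finset.disjoint_left, Finset.mem_image,
    Finset.mem_range, not_exists, not_and]
  rintro _ ⟨t, ht, rfl⟩ s hs h
  exact hij ((pathEdge_inj hT hs ht).1 h).1.symm

lemma card_filter_branchVertex_mem_pathEdges (hT : Admissible k p q r) (i : Fin 6) (a : Fin 3) :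
    ((pathEdges k p q r i).filter (branchVertex k p q r a ∈ ·)).card =
      if a = (pathEnds i).1 ∨ a = (pathEnds i).2 then 1 else 0 := by
  have hL : 0 < pathLen k p q r i := hT.one_le_pathLen i
  rw [pathEdges, Finset.filter_image, Finset.card_image_of_injOn
    ((pathEdge_injOn hT i).mono (Finset.coe_subset.2 (Finset.filter_subset _ _))),
    Finset.filter_congr (fun t ht => branchVertex_mem_pathEdge_iff (Finset.mem_range.1 ht))]
  by_cases h1 : a = (pathEnds i).1
  · rw [if_pos (Or.inl h1), Finset.card_eq_one]
    exact ⟨0, by ext t; simp [h1, pathEnds_fst_ne_snd i, hL]⟩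
  by_cases h2 : a = (pathEnds i).2
  · rw [if_pos (Or.inr h2), Finset.card_eq_one]
    exact ⟨pathLen k p q r i - 1, by ext t; simp [h2]; omega⟩
  · simp [h1, h2]

section ClosedTrail

variable {x : TVert k p q r} {c : (TGraph k p q r).Walk x x}

/-- Internal vertices of a path have degree two, and a closed trail uses an even number of edges
at every vertex. -/
lemma pathEdge_mem_edges_iff (hT : Admissible k p q r) (hc : c.IsTrail)
    (ht : t < pathLen k p q r i) :
    pathEdge k p q r i t ∈ c.edges ↔ pathEdge k p q r i 0 ∈ c.edges := by
  induction t with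
  | zero => rfl
  | succ t ih =>
    rw [← ih (by omega)]
    refine (hc.mem_edges_iff_of_incident (x := pathVertex k p q r i (t + 1)) (fun h => ?_)
      (Sym2.mem_mk_right _ _) (Sym2.mem_mk_left _ _)
      (fun f hf hv => eq_pathEdge_of_pathVertex_mem ht (c.edges_subset_edgeSet hf) hv)).symm
    have := ((pathEdge_inj hT (by omega) ht).1 h).2
    omega

def usedPaths (c : (TGraph k p q r).Walk x x) : Finset (Fin 6) :=
  Finset.univ.filter (pathEdge k p q r · 0 ∈ c.edges)

lemma edges_toFinset_eq_biUnion (hT : Admissible k p q r) (hc : c.IsTrail) :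
    c.edges.toFinset = (usedPaths c).biUnion (pathEdges k p q r) := by
  ext e
  simp only [List.mem_toFinset, Finset.mem_biUnion, usedPaths, Finset.mem_filter,
    Finset.mem_univ, true_and, pathEdges, Finset.mem_image, Finset.mem_range]
  constructor
  · intro he
    obtain ⟨i, t, ht, rfl⟩ := exists_eq_pathEdge (c.edges_subset_edgeSet he)
    exact ⟨i, (pathEdge_mem_edges_iff hT hc ht).1 he, t, ht, rfl⟩
  · rintro ⟨i, hi, t, ht, rfl⟩
    exact (pathEdge_mem_edges_iff hT hc ht).2 hi

lemma length_eq_sum_pathLen (hT : Admissible k p q r) (hc : c.IsTrail) :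
    c.length = ∑ i ∈ usedPaths c, pathLen k p q r i := by
  rw [← c.length_edges, ← List.toFinset_card_of_nodup hc.edges_nodup,
    edges_toFinset_eq_biUnion hT hc, Finset.card_biUnion (pairwiseDisjoint_pathEdges hT _)]
  exact Finset.sum_congr rfl fun i _ => card_pathEdges hT i

lemma even_card_usedPaths_incident (hT : Admissible k p q r) (hc : c.IsTrail)
    (a : Fin 3) :
    Even ((usedPaths c).filter (fun i => a = (pathEnds i).1 ∨ a = (pathEnds i).2)).card := by
  have heven := (hc.even_countP_edges_iff (branchVertex k p q r a)).2 (absurd rfl)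
  rw [← hc.edges_nodup.card_eq_countP, edges_toFinset_eq_biUnion hT hc, Finset.filter_biUnion,
    Finset.card_biUnion] at heven
  · simpa only [card_filter_branchVertex_mem_pathEdges hT, Finset.card_filter] using heven
  · exact (pairwiseDisjoint_pathEdges hT _).mono fun i => Finset.filter_subset _ _

end ClosedTrail

lemma le_sum_pathLen (hT : Admissible k p q r) (heven : Even (p + q + r))
    (hpqr : p ≤ q + r) (hqpr : q ≤ p + r) (hrpq : r ≤ p + q) (S : Finset (Fin 6))
    (hdeg : ∀ a : Fin 3,
      Even (S.filter (fun i => a = (pathEnds i).1 ∨ a = (pathEnds i).2)).card)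
    (hodd : Odd (∑ i ∈ S, pathLen k p q r i)) :
    2 * k + 1 ≤ ∑ i ∈ S, pathLen k p q r i := by
  obtain ⟨_, _, _, _, _, _⟩ := hT
  have h0 := hdeg 0
  have h1 := hdeg 1
  have h2 := hdeg 2
  rw [Finset.card_filter, ← Fintype.sum_ite_mem, Fin.sum_univ_six] at h0 h1 h2
  rw [← Fintype.sum_ite_mem, Fin.sum_univ_six] at hodd ⊢
  simp only [pathEnds, pathLen, Fin.isValue, Matrix.cons_val, Fin.reduceEq, or_false,
    or_true, if_false, if_true, ite_self, add_zero] at h0 h1 h2 hodd ⊢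
  rw [Nat.even_iff] at h0 h1 h2 heven
  rw [Nat.odd_iff] at hodd
  by_cases h₀ : (0 : Fin 6) ∈ S <;> by_cases h₁ : (1 : Fin 6) ∈ S <;>
    by_cases h₂ : (2 : Fin 6) ∈ S <;> by_cases h₃ : (3 : Fin 6) ∈ S <;>
    by_cases h₄ : (4 : Fin 6) ∈ S <;> by_cases h₅ : (5 : Fin 6) ∈ S <;>
    simp only [h₀, h₁, h₂, h₃, h₄, h₅, if_true, if_false] at h0 h1 h2 hodd ⊢ <;> omega

def pathPrefix (k p q r : ℕ) (i : Fin 6) :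
    (t : ℕ) → t ≤ pathLen k p q r i →
      (TGraph k p q r).Walk (pathVertex k p q r i 0) (pathVertex k p q r i t)
  | 0, _ => Walk.nil
  | t + 1, h => (pathPrefix k p q r i t (by omega)).concat (adj_pathVertex_succ h)

lemma length_pathPrefix (ht : t ≤ pathLen k p q r i) :
    (pathPrefix k p q r i t ht).length = t := by
  induction t with
  | zero => rfl
  | succ t ih => rw [pathPrefix, Walk.length_concat, ih]

lemma support_pathPrefix (ht : t ≤ pathLen k p q r i) :
    (pathPrefix k p q r i t ht).support = (List.range (t + 1)).map (pathVertex k p q r i) := by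
  induction t with
  | zero => rfl
  | succ t ih =>
    rw [pathPrefix, Walk.support_concat, ih, List.range_succ (n := t + 1), List.map_append]
    rfl

lemma isPath_pathPrefix (ht : t ≤ pathLen k p q r i) : (pathPrefix k p q r i t ht).IsPath := by
  rw [Walk.isPath_def, support_pathPrefix]
  refine List.Nodup.map_on (fun s hs s' hs' h => pathVertex_injOn ?_ ?_ h) List.nodup_range
  · exact Set.mem_Iic.2 (by have := List.mem_range.1 hs; omega)
  · exact Set.mem_Iic.2 (by have := List.mem_range.1 hs'; omega)

lemma exists_isPath_of_pathEnds (hT : Admissible k p q r) {a b : Fin 3}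
    (h : pathEnds i = (a, b)) :
    ∃ W : (TGraph k p q r).Walk (branchVertex k p q r a) (branchVertex k p q r b),
      W.IsPath ∧ W.length = pathLen k p q r i ∧
      ∀ x ∈ W.support, x = branchVertex k p q r a ∨ x = branchVertex k p q r b ∨
        innerPath x = some i := by
  have h0 : pathVertex k p q r i 0 = branchVertex k p q r a := by rw [pathVertex_zero, h]
  have hL : pathVertex k p q r i (pathLen k p q r i) = branchVertex k p q r b := by
    rw [pathVertex_of_le (hT.one_le_pathLen i) le_rfl, h]
  refine ⟨(pathPrefix k p q r i _ le_rfl).copy h0 hL, (Walk.isPath_copy _ _ _).2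
    (isPath_pathPrefix le_rfl), by rw [Walk.length_copy, length_pathPrefix], fun x hx => ?_⟩
  rw [Walk.support_copy, support_pathPrefix, List.mem_map] at hx
  obtain ⟨t, -, rfl⟩ := hx
  simpa [h] using pathVertex_cases i t

lemma exists_isCycle_length_eq (hT : Admissible k p q r) (hi : pathEnds i = (0, 1))
    (hj : pathEnds j = (1, 2)) (hl : pathEnds l = (0, 2)) :
    ∃ c : (TGraph k p q r).Walk (branchVertex k p q r 0) (branchVertex k p q r 0),
      c.IsCycle ∧ c.length = pathLen k p q r i + pathLen k p q r j + pathLen k p q r l := by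
  obtain ⟨Wi, hWi, hWi_len, hWi_mem⟩ := exists_isPath_of_pathEnds hT hi
  obtain ⟨Wj, hWj, hWj_len, hWj_mem⟩ := exists_isPath_of_pathEnds hT hj
  obtain ⟨Wl, hWl, hWl_len, hWl_mem⟩ := exists_isPath_of_pathEnds hT hl
  have hij : i ≠ j := fun h => by simp [h, hj] at hi
  have hil : i ≠ l := fun h => by simp [h, hl] at hi
  have hjl : j ≠ l := fun h => by simp [h, hl] at hj
  have hQ : (Wj.append Wl.reverse).IsPath := by
    refine hWj.append_of_support_inter ((Walk.isPath_reverse_iff _).2 hWl) fun x hxj hxl => ?_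
    rw [Walk.support_reverse, List.mem_reverse] at hxl
    rcases hWj_mem x hxj with h | h | h <;> rcases hWl_mem x hxl with h' | h' | h' <;> simp_all
  refine ⟨Wi.append (Wj.append Wl.reverse), hWi.isCycle_append_of_support_inter hQ ?_ ?_, ?_⟩
  · intro x hxi hxQ
    rw [Walk.mem_support_append_iff, Walk.support_reverse, List.mem_reverse] at hxQ
    rcases hWi_mem x hxi with h | h | h
    · exact Or.inl h
    · exact Or.inr h
    rcases hxQ with hxQ | hxQ
    · rcases hWj_mem x hxQ with h' | h' | h' <;> simp_all
    · rcases hWl_mem x hxQ with h' | h' | h' <;> simp_all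
  · have := hT.one_le_pathLen j
    have := hT.one_le_pathLen l
    simp only [Walk.length_append, Walk.length_reverse, hWj_len, hWl_len]
    omega
  · simp only [Walk.length_append, Walk.length_reverse, hWi_len, hWj_len, hWl_len]
    omega

lemma oddGirthAtLeast_of_triangle (hT : Admissible k p q r) (heven : Even (p + q + r))
    (hpqr : p ≤ q + r) (hqpr : q ≤ p + r) (hrpq : r ≤ p + q) :
    oddGirthAtLeast (TGraph k p q r) (2 * k + 1) := by
  intro x c hc hodd
  have htrail := hc.isCircuit.isTrail
  rw [length_eq_sum_pathLen hT htrail] at hodd ⊢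
  exact le_sum_pathLen hT heven hpqr hqpr hrpq _ (even_card_usedPaths_incident hT htrail) hodd

lemma le_of_oddGirthAtLeast (hT : Admissible k p q r)
    (hG : oddGirthAtLeast (TGraph k p q r) (2 * k + 1)) {i j l : Fin 6}
    (hi : pathEnds i = (0, 1)) (hj : pathEnds j = (1, 2)) (hl : pathEnds l = (0, 2))
    (hodd : Odd (pathLen k p q r i + pathLen k p q r j + pathLen k p q r l)) :
    2 * k + 1 ≤ pathLen k p q r i + pathLen k p q r j + pathLen k p q r l := by
  obtain ⟨c, hc, hlen⟩ := exists_isCycle_length_eq hT hi hj hl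
  rw [← hlen] at hodd ⊢
  exact hG _ c hc hodd

end TGraph

theorem even_case_TGraph_oddGirth_general (k p q r : ℕ)
    (hp : 1 ≤ p) (hp' : p ≤ k) (hq : 1 ≤ q) (hq' : q ≤ k)
    (hr : 1 ≤ r) (hr' : r ≤ k) (heven : Even (p + q + r)) :
    oddGirthAtLeast (TGraph k p q r) (2*k+1) ↔
      (p ≤ q + r ∧ q ≤ p + r ∧ r ≤ p + q) := by
  have hT : TGraph.Admissible k p q r := ⟨hp, hp', hq, hq', hr, hr'⟩
  refine ⟨fun hG => ?_, fun ⟨hpqr, hqpr, hrpq⟩ =>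
    TGraph.oddGirthAtLeast_of_triangle hT heven hpqr hqpr hrpq⟩
  have hpar := Nat.even_iff.1 heven
  have h₁ : 2 * k + 1 ≤ (2 * k + 1 - p) + r + q :=
    TGraph.le_of_oddGirthAtLeast hT hG (i := 1) (j := 4) (l := 2) rfl rfl rfl
      (Nat.odd_iff.2 (show (2 * k + 1 - p + r + q) % 2 = 1 by omega))
  have h₂ : 2 * k + 1 ≤ p + r + (2 * k + 1 - q) :=
    TGraph.le_of_oddGirthAtLeast hT hG (i := 0) (j := 4) (l := 3) rfl rfl rfl
      (Nat.odd_iff.2 (show (p + r + (2 * k + 1 - q)) % 2 = 1 by omega))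
  have h₃ : 2 * k + 1 ≤ p + (2 * k + 1 - r) + q :=
    TGraph.le_of_oddGirthAtLeast hT hG (i := 0) (j := 5) (l := 2) rfl rfl rfl
      (Nat.odd_iff.2 (show (p + (2 * k + 1 - r) + q) % 2 = 1 by omega))
  omega

theorem even_case_TGraph_oddGirth (k p q r : ℕ) (hk : 1 ≤ k)
    (hp : 1 ≤ p) (hp' : p ≤ k) (hq : 1 ≤ q) (hq' : q ≤ k)
    (hr : 1 ≤ r) (hr' : r ≤ k) (heven : Even (p + q + r)) :
    oddGirthAtLeast (TGraph k p q r) (2*k+1) ↔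
      (p ≤ q + r ∧ q ≤ p + r ∧ r ≤ p + q) :=
  even_case_TGraph_oddGirth_general k p q r hp hp' hq hq' hr hr' heven
end

section
/- Every K_4-minor-free graph of odd-girth at least 2k+1 admits a homomorphism to the Kneser graph K(2k+1, k). -/
open SimpleGraph

/-- The Kneser graph `K(n,r)`: vertices are the `r`-element subsets of an `n`-set,
adjacent iff disjoint. -/
def Kneser (n r : ℕ) : SimpleGraph {s : Finset (Fin n) // s.card = r} :=
  SimpleGraph.fromRel fun a b => Disjoint a.1 b.1

/-- `G` has a `K₄` minor: there are four nonempty, pairwise disjoint, connected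
branch sets with an edge of `G` between every two of them. -/
def HasK4Minor {V : Type*} (G : SimpleGraph V) : Prop :=
  ∃ S : Fin 4 → Set V,
    (∀ i, (S i).Nonempty) ∧
    (∀ i, (G.induce (S i)).Connected) ∧
    (Pairwise fun i j => Disjoint (S i) (S j)) ∧
    (Pairwise fun i j => ∃ a ∈ S i, ∃ b ∈ S j, G.Adj a b)

/-!
A `K₄`-minor-free graph has a vertex of degree at most two (Dirac), and suppressing it, i.e.
deleting it and joining its neighbours, keeps the graph `K₄`-minor-free. Each new edge records
the lengths of the walks of `G` it replaces, so by induction the reduced graph has an assignment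
of `k`-subsets of a `(2k+1)`-set in which every recorded length is realised by a walk of
`K(2k+1, k)`. The suppressed vertex then needs a `k`-set whose intersections with the sets of
its at most two neighbours lie in prescribed ranges; the odd-girth bound, applied to the closed
walks through that vertex, makes these ranges compatible. Length-one requests are exactly the
adjacencies of `K(2k+1, k)`.
-/

namespace Set

variable {α : Type*} {s t : Set α}

lemma exists_mem_ne_ne_of_three_le_ncard [Finite α] (h : 3 ≤ s.ncard) (x y : α) :
    ∃ u ∈ s, u ≠ x ∧ u ≠ y := by
  by_contra! hs
  have : s.ncard ≤ ({x, y} : Set α).ncard :=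
    ncard_le_ncard fun u hu => by
      by_cases hux : u = x
      · simp [hux]
      · simp [hs u hu hux]
  have := ncard_insert_le x {y}
  simp only [ncard_singleton] at this
  omega

lemma exists_subset_pair_of_ncard_le_two [Finite α] (hs : s.Nonempty) (h : s.ncard ≤ 2) :
    ∃ a ∈ s, ∃ b ∈ s, s ⊆ {a, b} := by
  have := (ncard_pos (s := s)).mpr hs
  obtain h1 | h2 : s.ncard = 1 ∨ s.ncard = 2 := by omega
  · obtain ⟨a, rfl⟩ := ncard_eq_one.mp h1
    exact ⟨a, rfl, a, rfl, by simp⟩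
  · obtain ⟨a, b, -, rfl⟩ := ncard_eq_two.mp h2
    exact ⟨a, by simp, b, by simp, subset_rfl⟩

lemma ncard_le_ncard_of_insert_diff_subset [Finite α] {p q : α} (hp : p ∉ s) (hq : q ∈ s)
    (h : insert p (s \ {q}) ⊆ t) : s.ncard ≤ t.ncard := by
  have h1 := ncard_sdiff_singleton_add_one hq
  have h2 := ncard_insert_of_notMem (s := s \ {q}) (fun hp' => hp hp'.1)
  have h3 := ncard_le_ncard h
  omega

lemma exists_eq_pair_of_ncard_eq_two {y : α} (hs : s.ncard = 2) (hy : y ∈ s) :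
    ∃ a, a ≠ y ∧ s = {y, a} := by
  obtain ⟨p, q, hpq, rfl⟩ := ncard_eq_two.mp hs
  rcases hy with rfl | rfl
  · exact ⟨q, hpq.symm, rfl⟩
  · exact ⟨p, hpq, pair_comm _ _⟩

lemma pred_ncard_le_of_diff_subset [Finite α] {q : α} (h : s \ {q} ⊆ t) : s.ncard - 1 ≤ t.ncard :=
  (pred_ncard_le_ncard_sdiff_singleton s q).trans (ncard_le_ncard h)

end Set

/-! ### Odd closed walks -/

namespace SimpleGraph.Walk

variable {V : Type*} {G : SimpleGraph V}

lemma exists_loop_of_not_isPath [DecidableEq V] :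
    ∀ {u v : V} (p : G.Walk u v), ¬ p.IsPath →
      ∃ (z : V) (c : G.Walk z z) (q : G.Walk u v), 0 < c.length ∧ q.length + c.length = p.length
  | _, _, .nil, hp => (hp .nil).elim
  | u, _, .cons h p, hp => by
    by_cases hpp : p.IsPath
    · have hu : u ∈ p.support := by simpa [cons_isPath_iff, hpp] using hp
      refine ⟨u, cons h (p.takeUntil u hu), p.dropUntil u hu, by simp, ?_⟩
      have := congrArg length (p.take_spec hu)
      rw [length_append] at this
      simp only [length_cons]
      omega
    · obtain ⟨z, c, q, hc, hlen⟩ := exists_loop_of_not_isPath p hpp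
      exact ⟨z, c, cons h q, hc, by simp only [length_cons]; omega⟩

theorem exists_isCycle_odd_length_le [DecidableEq V] {x : V} (w : G.Walk x x)
    (hw : Odd w.length) :
    ∃ (y : V) (c : G.Walk y y), c.IsCycle ∧ Odd c.length ∧ c.length ≤ w.length := by
  induction hn : w.length using Nat.strong_induction_on generalizing x with
  | _ n ih =>
  subst hn
  cases w with
  | nil => simp at hw
  | cons h p =>
    by_cases hp : p.IsPath
    · have he : s(x, _) ∉ p.edges := fun he => by
        have := hp.length_eq_one_of_mem_edges (Sym2.eq_swap ▸ he)
        simp [this, Nat.odd_iff] at hw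
      exact ⟨x, cons h p, (cons_isCycle_iff p h).mpr ⟨hp, he⟩, hw, le_rfl⟩
    · obtain ⟨z, c, q, hc1, hlen⟩ := exists_loop_of_not_isPath p hp
      have hlen' : (cons h q).length + c.length = (cons h p).length := by
        simp only [length_cons]; omega
      have hq1 : 0 < (cons h q).length := by simp
      rcases Nat.even_or_odd c.length with hce | hco
      · have hqo : Odd (cons h q).length := by
          rw [← hlen'] at hw; exact (Nat.odd_add.mp hw).mpr hce
        obtain ⟨y, d, hd, hdo, hdl⟩ := ih _ (by omega) (cons h q) hqo rfl
        exact ⟨y, d, hd, hdo, by omega⟩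
      · obtain ⟨y, d, hd, hdo, hdl⟩ := ih _ (by omega) c hco rfl
        exact ⟨y, d, hd, hdo, by omega⟩

end SimpleGraph.Walk

lemma oddGirthAtLeast.le_length_of_odd {V : Type*} {G : SimpleGraph V} {n : ℕ}
    (h : oddGirthAtLeast G n) {x : V} (w : G.Walk x x) (hw : Odd w.length) : n ≤ w.length := by
  classical
  obtain ⟨y, c, hc, hco, hcl⟩ := w.exists_isCycle_odd_length_le hw
  exact (h y c hc hco).trans hcl

/-! ### Suppression, contraction and `K₄` minors -/

namespace SimpleGraph

variable {V : Type*} {H H' : SimpleGraph V}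

def eliminate (H : SimpleGraph V) (x : V) : SimpleGraph V :=
  H.deleteIncidenceSet x ⊔ fromRel fun a b => H.Adj x a ∧ H.Adj x b

def contractOnto (H : SimpleGraph V) (p q : V) : SimpleGraph V :=
  H.deleteIncidenceSet q ⊔ fromRel fun a b => a = p ∧ H.Adj q b

def restrict (H : SimpleGraph V) (t : Set V) : SimpleGraph V where
  Adj a b := H.Adj a b ∧ a ∈ t ∧ b ∈ t
  symm := ⟨fun _ _ h => ⟨h.1.symm, h.2.2, h.2.1⟩⟩
  loopless := ⟨fun _ h => H.irrefl h.1⟩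

lemma restrict_adj {t : Set V} {a b : V} : (H.restrict t).Adj a b ↔ H.Adj a b ∧ a ∈ t ∧ b ∈ t :=
  Iff.rfl

lemma eliminate_adj {x a b : V} : (H.eliminate x).Adj a b ↔
    (H.Adj a b ∧ a ≠ x ∧ b ≠ x) ∨ (a ≠ b ∧ H.Adj x a ∧ H.Adj x b) := by
  simp only [eliminate, sup_adj, deleteIncidenceSet_adj, fromRel_adj]
  tauto

lemma contractOnto_adj {p q a b : V} : (H.contractOnto p q).Adj a b ↔
    (H.Adj a b ∧ a ≠ q ∧ b ≠ q) ∨ (a ≠ b ∧ (a = p ∧ H.Adj q b ∨ b = p ∧ H.Adj q a)) := by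
  simp only [contractOnto, sup_adj, deleteIncidenceSet_adj, fromRel_adj]

lemma restrict_le (t : Set V) : H.restrict t ≤ H := fun _ _ h => (restrict_adj.mp h).1

lemma support_eliminate_subset (x : V) : (H.eliminate x).support ⊆ H.support \ {x} := by
  rintro a ⟨b, hab⟩
  rcases eliminate_adj.mp hab with ⟨h, hax, -⟩ | ⟨-, hxa, -⟩
  · exact ⟨⟨b, h⟩, hax⟩
  · exact ⟨⟨x, hxa.symm⟩, hxa.ne'⟩

lemma support_contractOnto_subset {p q : V} (hpq : H.Adj p q) :
    (H.contractOnto p q).support ⊆ H.support \ {q} := by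
  rintro a ⟨b, hab⟩
  rcases contractOnto_adj.mp hab with ⟨h, haq, -⟩ | ⟨-, ⟨rfl, -⟩ | ⟨-, hqa⟩⟩
  · exact ⟨⟨b, h⟩, haq⟩
  · exact ⟨⟨q, hpq⟩, hpq.ne⟩
  · exact ⟨⟨q, hqa.symm⟩, hqa.ne'⟩

lemma support_restrict_subset (t : Set V) : (H.restrict t).support ⊆ H.support ∩ t :=
  fun _ ⟨b, h⟩ => ⟨⟨b, (restrict_adj.mp h).1⟩, (restrict_adj.mp h).2.1⟩

lemma _root_.HasK4Minor.mono (hle : H' ≤ H) : HasK4Minor H' → HasK4Minor H := by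
  rintro ⟨S, hne, hconn, hdisj, hadj⟩
  refine ⟨S, hne, fun i => (hconn i).mono fun _ _ h => hle h, hdisj, fun i j hij => ?_⟩
  obtain ⟨a, ha, b, hb, hab⟩ := hadj hij
  exact ⟨a, ha, b, hb, hle hab⟩

lemma Reachable.of_forall_adj {W₁ W₂ : Type*} {G₁ : SimpleGraph W₁} {G₂ : SimpleGraph W₂}
    (f : W₁ → W₂) (h : ∀ a b, G₁.Adj a b → G₂.Reachable (f a) (f b)) {u v : W₁}
    (huv : G₁.Reachable u v) : G₂.Reachable (f u) (f v) := by
  obtain ⟨w⟩ := huv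
  induction w with
  | nil => rfl
  | cons hab _ ih => exact (h _ _ hab).trans ih

lemma connected_induce_union_of_route {x p : V}
    (hroute : ∀ a b, H'.Adj a b → H.Adj a b ∨ (H.Adj a x ∧ H.Adj x b ∧ (a = p ∨ b = p)))
    (hxp : H.Adj x p) {S : Set V} (hS : (H'.induce S).Connected) :
    (H.induce (S ∪ {z | z = x ∧ p ∈ S})).Connected := by
  set T := S ∪ {z | z = x ∧ p ∈ S}
  have hST : S ⊆ T := Set.subset_union_left
  have hedge : ∀ a b : S, (H'.induce S).Adj a b →
      (H.induce T).Reachable (Set.inclusion hST a) (Set.inclusion hST b) := by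
    rintro ⟨a, ha⟩ ⟨b, hb⟩ hab
    rcases hroute a b hab with h | ⟨hax, hxb, hp⟩
    · exact Adj.reachable (G := H.induce T) h
    · have hxT : x ∈ T := Or.inr ⟨rfl, by rcases hp with rfl | rfl <;> assumption⟩
      exact (Adj.reachable (G := H.induce T) (u := ⟨a, hST ha⟩) (v := ⟨x, hxT⟩) hax).trans
        (Adj.reachable (G := H.induce T) (v := ⟨b, hST hb⟩) hxb)
  obtain ⟨⟨v₀, hv₀⟩⟩ := hS.nonempty
  refine (connected_iff_exists_forall_reachable _).mpr ⟨⟨v₀, hST hv₀⟩, ?_⟩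
  rintro ⟨w, hw | ⟨rfl, hpS⟩⟩
  · exact Reachable.of_forall_adj (Set.inclusion hST) hedge (hS.preconnected ⟨v₀, hv₀⟩ ⟨w, hw⟩)
  · refine (Reachable.of_forall_adj (Set.inclusion hST) hedge
      (hS.preconnected ⟨v₀, hv₀⟩ ⟨p, hpS⟩)).trans (Adj.reachable ?_)
    exact hxp.symm

/-- The branch sets of a `K₄` minor of `H'` stay branch sets in `H` once `x` joins the one
containing `p`. -/
theorem _root_.HasK4Minor.of_route {x p : V}
    (hroute : ∀ a b, H'.Adj a b → H.Adj a b ∨ (H.Adj a x ∧ H.Adj x b ∧ (a = p ∨ b = p)))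
    (hx : ∀ b, ¬ H'.Adj x b) (hxp : H.Adj x p) :
    HasK4Minor H' → HasK4Minor H := by
  rintro ⟨S, hne, hconn, hdisj, hadj⟩
  have hxS : ∀ i, x ∉ S i := by
    intro i hxi
    obtain ⟨j, hji⟩ := exists_ne i
    obtain ⟨a, ha, b, -, hab⟩ := hadj hji.symm
    obtain ⟨w⟩ := (hconn i).preconnected ⟨x, hxi⟩ ⟨a, ha⟩
    cases w with
    | nil => exact hx b hab
    | cons h _ => exact hx _ h
  refine ⟨fun i => S i ∪ {z | z = x ∧ p ∈ S i}, fun i => (hne i).mono Set.subset_union_left,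
    fun i => connected_induce_union_of_route hroute hxp (hconn i), fun i j hij => ?_,
    fun i j hij => ?_⟩
  · dsimp only
    rw [Set.disjoint_left]
    rintro z (hz | ⟨rfl, hpi⟩) (hz' | ⟨hzx, hpj⟩)
    · exact Set.disjoint_left.mp (hdisj hij) hz hz'
    · exact hxS i (hzx ▸ hz)
    · exact hxS j hz'
    · exact Set.disjoint_left.mp (hdisj hij) hpi hpj
  · obtain ⟨a, ha, b, hb, hab⟩ := hadj hij
    rcases hroute a b hab with h | ⟨hax, hxb, rfl | rfl⟩
    · exact ⟨a, Or.inl ha, b, Or.inl hb, h⟩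
    · exact ⟨x, Or.inr ⟨rfl, ha⟩, b, Or.inl hb, hxb⟩
    · exact ⟨a, Or.inl ha, x, Or.inr ⟨rfl, hb⟩, hax⟩

theorem _root_.HasK4Minor.of_eliminate {x p q : V} (hN : ∀ b, H.Adj x b → b = p ∨ b = q) :
    HasK4Minor (H.eliminate x) → HasK4Minor H := by
  by_cases hxp : H.Adj x p
  · refine HasK4Minor.of_route (fun a b hab => ?_) (fun b hb => ?_) hxp
    · rcases eliminate_adj.mp hab with h | ⟨hab, hxa, hxb⟩
      · exact Or.inl h.1
      · refine Or.inr ⟨hxa.symm, hxb, ?_⟩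
        rcases hN a hxa with rfl | rfl <;> rcases hN b hxb with rfl | rfl <;> simp_all
    · rcases eliminate_adj.mp hb with h | h
      · exact h.2.1 rfl
      · exact H.irrefl h.2.1
  · refine HasK4Minor.mono fun a b hab => ?_
    rcases eliminate_adj.mp hab with h | ⟨hab, hxa, hxb⟩
    · exact h.1
    · have hq : ∀ c, H.Adj x c → c = q := fun c hc => (hN c hc).resolve_left (by
        rintro rfl; exact hxp hc)
      exact absurd ((hq a hxa).trans (hq b hxb).symm) hab

theorem _root_.HasK4Minor.of_contractOnto {p q : V} (hpq : H.Adj p q) :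
    HasK4Minor (H.contractOnto p q) → HasK4Minor H := by
  refine HasK4Minor.of_route (fun a b hab => ?_) (fun b hb => ?_) hpq.symm
  · rcases contractOnto_adj.mp hab with h | ⟨-, ⟨rfl, hqb⟩ | ⟨rfl, hqa⟩⟩
    · exact Or.inl h.1
    · exact Or.inr ⟨hpq, hqb, Or.inl rfl⟩
    · exact Or.inr ⟨hqa.symm, hpq.symm, Or.inr rfl⟩
  · rcases contractOnto_adj.mp hb with h | ⟨-, ⟨h, -⟩ | ⟨-, h⟩⟩
    · exact h.2.1 rfl
    · exact hpq.ne h.symm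
    · exact H.irrefl h

lemma Walk.notMem_support_of_deleteIncidenceSet {x : V} :
    ∀ {u w : V} (p : (H.deleteIncidenceSet x).Walk u w), u ≠ x → x ∉ p.support
  | _, _, .nil, hu => by simpa using hu.symm
  | _, _, .cons h p, hu => by
    rw [support_cons, List.mem_cons, not_or]
    exact ⟨hu.symm, notMem_support_of_deleteIncidenceSet p (deleteIncidenceSet_adj.mp h).2.2⟩

lemma hasK4Minor_of_triangle {v a b : V} (hva : H.Adj v a) (hvb : H.Adj v b) (hab : H.Adj a b)
    {T : Set V} (hT : (H.induce T).Connected) (hvT : v ∉ T) (haT : a ∉ T) (hbT : b ∉ T)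
    {zv za zb : V} (hzv : zv ∈ T) (hza : za ∈ T) (hzb : zb ∈ T)
    (hv : H.Adj v zv) (ha : H.Adj a za) (hb : H.Adj b zb) : HasK4Minor H := by
  refine ⟨![{v}, {a}, {b}, T], fun i => ?_, fun i => ?_, fun i j hij => ?_, fun i j hij => ?_⟩
  · fin_cases i <;> simp [Set.nonempty_of_mem hzv]
  · fin_cases i <;> simp [hT]
  · fin_cases i <;> fin_cases j <;> simp_all [hva.ne, hvb.ne, hab.ne, hva.ne', hvb.ne', hab.ne']
  · fin_cases i <;> fin_cases j <;> simp_all [hva.symm, hvb.symm, hab.symm] <;>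
      first
        | exact ⟨zv, hzv, hv⟩ | exact ⟨za, hza, ha⟩ | exact ⟨zb, hzb, hb⟩
        | exact ⟨zv, hzv, hv.symm⟩ | exact ⟨za, hza, ha.symm⟩ | exact ⟨zb, hzb, hb.symm⟩

lemma hasK4Minor_of_reachable_deleteIncidenceSet {v a b c : V} (hva : H.Adj v a)
    (hvb : H.Adj v b) (hvc : H.Adj v c) (hab : H.Adj a b) (hac : H.Adj a c) (hbc : b ≠ c)
    (hr : ((H.deleteIncidenceSet v).deleteIncidenceSet a).Reachable b c) : HasK4Minor H := by
  obtain ⟨p, hp⟩ := hr.exists_isPath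
  cases p with
  | nil => exact absurd rfl hbc
  | @cons _ b' _ h q =>
    have hle : (H.deleteIncidenceSet v).deleteIncidenceSet a ≤ H.deleteIncidenceSet v :=
      deleteIncidenceSet_le _ _
    obtain ⟨hbb', -, hb'a⟩ := deleteIncidenceSet_adj.mp h
    obtain ⟨hbb', -, hb'v⟩ := deleteIncidenceSet_adj.mp hbb'
    have hT := (q.mapLe (hle.trans (deleteIncidenceSet_le _ _))).connected_induce_support
    rw [Walk.support_mapLe_eq_support] at hT
    refine hasK4Minor_of_triangle hva hvb hab hT ?_ (q.notMem_support_of_deleteIncidenceSet hb'a)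
      ((Walk.cons_isPath_iff _ _).mp hp).2 q.end_mem_support q.end_mem_support
      q.start_mem_support hvc hac hbb'
    simpa [Walk.support_mapLe_eq_support] using
      (q.mapLe hle).notMem_support_of_deleteIncidenceSet hb'v

/-! ### Dirac's theorem -/

lemma neighborSet_eliminate_of_not_adj {x v : V} (hvx : v ≠ x) (hxv : ¬ H.Adj x v) :
    (H.eliminate x).neighborSet v = H.neighborSet v := by
  ext b
  simp only [mem_neighborSet, eliminate_adj]
  exact ⟨fun h => h.elim (·.1) fun h => absurd h.2.1 hxv,
    fun h => Or.inl ⟨h, hvx, by rintro rfl; exact hxv h.symm⟩⟩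

lemma neighborSet_diff_subset_eliminate {x v : V} (hvx : v ≠ x) :
    H.neighborSet v \ {x} ⊆ (H.eliminate x).neighborSet v :=
  fun _ ⟨hb, hbx⟩ => eliminate_adj.mpr (Or.inl ⟨hb, hvx, hbx⟩)

lemma neighborSet_diff_subset_contractOnto {p q v : V} (hvq : v ≠ q) :
    H.neighborSet v \ {q} ⊆ (H.contractOnto p q).neighborSet v :=
  fun _ ⟨hb, hbq⟩ => contractOnto_adj.mpr (Or.inl ⟨hb, hvq, hbq⟩)

/-- The invariant of Dirac's induction: minimum degree three away from two exceptional vertices.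
Allowing an exceptional adjacent pair is what lets the separation step of `K4MinorBelow.of_fan`
recurse. -/
def NearlyMinDegreeThree (H : SimpleGraph V) (x y : V) : Prop :=
  (x ≠ y → H.Adj x y ∧ 2 ≤ (H.neighborSet x).ncard ∧ 2 ≤ (H.neighborSet y).ncard) ∧
    ∀ v ∈ H.support, v ≠ x → v ≠ y → 3 ≤ (H.neighborSet v).ncard

lemma NearlyMinDegreeThree.symm {x y : V} (h : NearlyMinDegreeThree H x y) :
    NearlyMinDegreeThree H y x :=
  ⟨fun hyx => let ⟨hxy, hx, hy⟩ := h.1 hyx.symm; ⟨hxy.symm, hy, hx⟩,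
    fun v hv hvy hvx => h.2 v hv hvx hvy⟩

def K4MinorBelow (H : SimpleGraph V) : Prop :=
  ∀ (H' : SimpleGraph V) (x y : V), H'.support.ncard < H.support.ncard →
    NearlyMinDegreeThree H' x y → H'.support.Nonempty → HasK4Minor H'

/-- In a graph of minimum degree three, contracting `pq` onto `p` preserves minimum degree three. -/
def IsContractible (H : SimpleGraph V) (p q : V) : Prop :=
  3 ≤ ((H.neighborSet p ∪ H.neighborSet q) \ {p, q}).ncard ∧
    ∀ z, H.Adj p z → H.Adj q z → 4 ≤ (H.neighborSet z).ncard

variable [Finite V]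

lemma support_ncard_lt_of_subset_diff {H' : SimpleGraph V} {x : V} (hx : x ∈ H.support)
    (h : H'.support ⊆ H.support \ {x}) : H'.support.ncard < H.support.ncard :=
  Set.ncard_lt_ncard (h.trans_ssubset (Set.sdiff_singleton_ssubset.mpr hx))

lemma K4MinorBelow.eliminate (ih : K4MinorBelow H) {x w₁ w₂ : V} (hx : x ∈ H.support)
    (hN : ∀ b, H.Adj x b → b = w₁ ∨ b = w₂)
    (hw : w₁ ≠ w₂ → H.Adj x w₁ ∧ H.Adj x w₂ ∧ 2 ≤ ((H.eliminate x).neighborSet w₁).ncard ∧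
      2 ≤ ((H.eliminate x).neighborSet w₂).ncard)
    (hdeg : ∀ v ∈ H.support, v ≠ x → ¬ H.Adj x v → 3 ≤ (H.neighborSet v).ncard)
    (hne : (H.eliminate x).support.Nonempty) : HasK4Minor H := by
  refine HasK4Minor.of_eliminate hN (ih _ w₁ w₂
    (support_ncard_lt_of_subset_diff hx (support_eliminate_subset x))
    ⟨fun h => ?_, fun v hv h₁ h₂ => ?_⟩ hne)
  · obtain ⟨hxw₁, hxw₂, hd₁, hd₂⟩ := hw h
    exact ⟨eliminate_adj.mpr (Or.inr ⟨h, hxw₁, hxw₂⟩), hd₁, hd₂⟩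
  · obtain ⟨hvH, hvx⟩ := support_eliminate_subset x hv
    have hxv : ¬ H.Adj x v := fun h => (hN v h).elim h₁ h₂
    rw [neighborSet_eliminate_of_not_adj hvx hxv]
    exact hdeg v hvH hvx hxv

/-- Eliminating only `x` would leave `y` exceptional of degree one, which the invariant does not
allow, so `y` is eliminated as well. -/
lemma K4MinorBelow.eliminate_eliminate (ih : K4MinorBelow H) {x y a : V} (hxy : H.Adj x y)
    (hxa : H.Adj x a) (hya : H.Adj y a) (hNx : ∀ b, H.Adj x b → b = y ∨ b = a)
    (hNy : ∀ b, H.Adj y b → b = x ∨ b = a) (ha : 3 ≤ (H.neighborSet a).ncard)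
    (hdeg : ∀ v ∈ H.support, v ≠ x → v ≠ y → v ≠ a → 3 ≤ (H.neighborSet v).ncard) :
    HasK4Minor H := by
  set H₁ := H.eliminate x
  have hNy₁ : ∀ b, H₁.Adj y b → b = a ∨ b = a := by
    intro b hb
    rcases eliminate_adj.mp hb with ⟨h, -, hbx⟩ | ⟨hyb, -, h⟩
    · exact Or.inl ((hNy b h).resolve_left hbx)
    · exact Or.inl ((hNx b h).resolve_left hyb.symm)
  have hsupp : (H₁.eliminate y).support ⊆ H.support \ {x} :=
    (support_eliminate_subset y).trans (Set.sdiff_subset.trans (support_eliminate_subset x))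
  refine HasK4Minor.of_eliminate hNx (HasK4Minor.of_eliminate hNy₁
    (ih _ a a (support_ncard_lt_of_subset_diff ⟨y, hxy⟩ hsupp)
      ⟨fun h => absurd rfl h, fun v hv hva _ => ?_⟩ ?_))
  · obtain ⟨hv₁, hvy⟩ := support_eliminate_subset y hv
    obtain ⟨hvH, hvx⟩ := support_eliminate_subset x hv₁
    have hyv : ¬ H₁.Adj y v := fun h => hva ((hNy₁ v h).elim id id)
    have hxv : ¬ H.Adj x v := fun h => (hNx v h).elim hvy hva
    rw [neighborSet_eliminate_of_not_adj hvy hyv, neighborSet_eliminate_of_not_adj hvx hxv]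
    exact hdeg v hvH hvx hvy hva
  · obtain ⟨u, hau, hux, huy⟩ := Set.exists_mem_ne_ne_of_three_le_ncard ha x y
    exact ⟨a, u, eliminate_adj.mpr (Or.inl ⟨eliminate_adj.mpr (Or.inl ⟨hau, hxa.ne', hux⟩),
      hya.ne', huy⟩)⟩

lemma K4MinorBelow.of_special_self (ih : K4MinorBelow H) {x : V} (hx : x ∈ H.support)
    (hx2 : (H.neighborSet x).ncard ≤ 2)
    (hdeg : ∀ v ∈ H.support, v ≠ x → 3 ≤ (H.neighborSet v).ncard) : HasK4Minor H := by
  obtain ⟨w₁, hw₁, w₂, hw₂, hN⟩ :=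
    Set.exists_subset_pair_of_ncard_le_two (s := H.neighborSet x) hx hx2
  have hdeg' : ∀ w, H.Adj x w → 2 ≤ ((H.eliminate x).neighborSet w).ncard := fun w hw => by
    have := Set.pred_ncard_le_of_diff_subset (neighborSet_diff_subset_eliminate (H := H) hw.ne')
    have := hdeg w ⟨x, hw.symm⟩ hw.ne'
    omega
  obtain ⟨u, hu, hux, -⟩ := Set.exists_mem_ne_ne_of_three_le_ncard
    (hdeg w₁ ⟨x, (show H.Adj x w₁ from hw₁).symm⟩ (H.ne_of_adj hw₁).symm) x x
  exact ih.eliminate hx hN (fun _ => ⟨hw₁, hw₂, hdeg' w₁ hw₁, hdeg' w₂ hw₂⟩)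
    (fun v hv hvx _ => hdeg v hv hvx)
    ⟨w₁, u, eliminate_adj.mpr (Or.inl ⟨hu, (H.ne_of_adj hw₁).symm, hux⟩)⟩

lemma K4MinorBelow.of_special_pair (ih : K4MinorBelow H) {x y : V} (hxy : x ≠ y)
    (h : NearlyMinDegreeThree H x y) (hx2 : (H.neighborSet x).ncard ≤ 2) : HasK4Minor H := by
  obtain ⟨⟨hadj, hx, hy⟩, hdeg⟩ := And.imp_left (· hxy) h
  obtain ⟨a, hay, hNx⟩ := Set.exists_eq_pair_of_ncard_eq_two (le_antisymm hx2 hx) hadj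
  have hN : ∀ b, H.Adj x b → b = y ∨ b = a := fun b hb => by
    simpa [hNx] using (show b ∈ H.neighborSet x from hb)
  have hxa : H.Adj x a := show a ∈ H.neighborSet x by simp [hNx]
  have ha3 : 3 ≤ (H.neighborSet a).ncard := hdeg a ⟨x, hxa.symm⟩ hxa.ne' hay
  by_cases htri : H.Adj y a ∧ (H.neighborSet y).ncard ≤ 2
  · obtain ⟨hya, hy2⟩ := htri
    have hNy : H.neighborSet y = {x, a} := (Set.eq_of_subset_of_ncard_le
      (Set.insert_subset hadj.symm (Set.singleton_subset_iff.mpr hya))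
      (by rw [Set.ncard_pair hxa.ne]; exact hy2)).symm
    exact ih.eliminate_eliminate hadj hxa hya hN
      (fun b hb => by simpa [hNy] using (show b ∈ H.neighborSet y from hb)) ha3
      (fun v hv hvx hvy _ => hdeg v hv hvx hvy)
  have hy' : 2 ≤ ((H.eliminate x).neighborSet y).ncard := by
    by_cases hya : H.Adj y a
    · have := Set.pred_ncard_le_of_diff_subset (neighborSet_diff_subset_eliminate (H := H) hxy.symm)
      have : ¬ (H.neighborSet y).ncard ≤ 2 := fun h => htri ⟨hya, h⟩
      omega
    · have := Set.ncard_le_ncard_of_insert_diff_subset (s := H.neighborSet y)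
        (t := (H.eliminate x).neighborSet y) hya hadj.symm (Set.insert_subset
        (eliminate_adj.mpr (Or.inr ⟨hay.symm, hadj, hxa⟩))
        (neighborSet_diff_subset_eliminate hxy.symm))
      omega
  have ha' : 2 ≤ ((H.eliminate x).neighborSet a).ncard := by
    have := Set.pred_ncard_le_of_diff_subset (neighborSet_diff_subset_eliminate (H := H) hxa.ne')
    omega
  exact ih.eliminate ⟨y, hadj⟩ hN (fun _ => ⟨hadj, hxa, hy', ha'⟩)
    (fun v hv hvx hxv => hdeg v hv hvx fun hvy => hxv (hvy ▸ hadj))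
    ⟨y, a, eliminate_adj.mpr (Or.inr ⟨hay.symm, hadj, hxa⟩)⟩

lemma K4MinorBelow.contract (ih : K4MinorBelow H)
    (hall : ∀ v ∈ H.support, 3 ≤ (H.neighborSet v).ncard) {p q : V} (hpq : H.Adj p q)
    (hc : IsContractible H p q) : HasK4Minor H := by
  have hp : (H.neighborSet p ∪ H.neighborSet q) \ {p, q} ⊆
      (H.contractOnto p q).neighborSet p := by
    rintro b ⟨hb | hb, hbpq⟩ <;>
      simp only [Set.mem_insert_iff, Set.mem_singleton_iff, not_or] at hbpq
    · exact contractOnto_adj.mpr (Or.inl ⟨hb, hpq.ne, hbpq.2⟩)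
    · exact contractOnto_adj.mpr (Or.inr ⟨(hbpq.1 ·.symm), Or.inl ⟨rfl, hb⟩⟩)
  have hp3 := hc.1.trans (Set.ncard_le_ncard hp)
  refine HasK4Minor.of_contractOnto hpq (ih _ p p
    (support_ncard_lt_of_subset_diff ⟨p, hpq.symm⟩ (support_contractOnto_subset hpq))
    ⟨fun h => absurd rfl h, fun v hv hvp _ => ?_⟩ ?_)
  · obtain ⟨hvH, hvq⟩ := support_contractOnto_subset hpq hv
    have h3 := hall v hvH
    have hsub := neighborSet_diff_subset_contractOnto (H := H) (p := p) hvq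
    by_cases hvq' : H.Adj v q
    · by_cases hvp' : H.Adj v p
      · have := hc.2 v hvp'.symm hvq'.symm
        have := Set.pred_ncard_le_of_diff_subset hsub
        omega
      · have := Set.ncard_le_ncard_of_insert_diff_subset (s := H.neighborSet v)
          (t := (H.contractOnto p q).neighborSet v) hvp' hvq' (Set.insert_subset
          (contractOnto_adj.mpr (Or.inr ⟨hvp, Or.inr ⟨rfl, hvq'.symm⟩⟩)) hsub)
        omega
    · rw [Set.sdiff_singleton_eq_self (s := H.neighborSet v) hvq'] at hsub
      exact h3.trans (Set.ncard_le_ncard hsub)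
  · obtain ⟨b, hb⟩ := Set.nonempty_of_ncard_ne_zero
      (by omega : ((H.contractOnto p q).neighborSet p).ncard ≠ 0)
    exact ⟨p, b, hb⟩

lemma exists_common_neighbor_of_not_isContractible {p q : V}
    (hp : 3 ≤ (H.neighborSet p).ncard) (hq : 3 ≤ (H.neighborSet q).ncard)
    (hc : ¬ IsContractible H p q) : ∃ z, H.Adj p z ∧ H.Adj q z := by
  by_contra! hno
  refine hc ⟨?_, fun z hpz hqz => absurd hqz (hno z hpz)⟩
  have hdisj : Disjoint (H.neighborSet p \ {q}) (H.neighborSet q \ {p}) :=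
    Set.disjoint_left.mpr fun z hz hz' => hno z hz.1 hz'.1
  have hsub : (H.neighborSet p \ {q}) ∪ (H.neighborSet q \ {p}) ⊆
      (H.neighborSet p ∪ H.neighborSet q) \ {p, q} := by
    rintro z (⟨hz, hzq⟩ | ⟨hz, hzp⟩)
    · refine ⟨Or.inl hz, ?_⟩
      rintro (rfl | rfl)
      · exact H.irrefl hz
      · exact hzq rfl
    · refine ⟨Or.inr hz, ?_⟩
      rintro (rfl | rfl)
      · exact hzp rfl
      · exact H.irrefl hz
  have := Set.ncard_union_eq hdisj
  have := Set.ncard_le_ncard hsub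
  have := Set.pred_ncard_le_ncard_sdiff_singleton (H.neighborSet p) q
  have := Set.pred_ncard_le_ncard_sdiff_singleton (H.neighborSet q) p
  omega

lemma exists_ncard_neighborSet_eq_three (hall : ∀ v ∈ H.support, 3 ≤ (H.neighborSet v).ncard)
    (hne : H.support.Nonempty) (hc : ∀ p q, H.Adj p q → ¬ IsContractible H p q) :
    ∃ v ∈ H.support, (H.neighborSet v).ncard = 3 := by
  by_contra! h
  have h4 : ∀ v ∈ H.support, 4 ≤ (H.neighborSet v).ncard :=
    fun v hv => (hall v hv).lt_of_ne (h v hv).symm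
  obtain ⟨v, u, hvu⟩ := hne
  refine hc v u hvu ⟨?_, fun z hvz _ => h4 z ⟨v, hvz.symm⟩⟩
  have := Set.pred_ncard_le_of_diff_subset (s := H.neighborSet v) (q := u)
    (t := (H.neighborSet v ∪ H.neighborSet u) \ {v, u}) fun z ⟨hz, hzu⟩ => ⟨Or.inl hz, by
      rintro (rfl | rfl)
      · exact H.irrefl hz
      · exact hzu rfl⟩
  have := h4 v ⟨u, hvu⟩
  omega

lemma K4MinorBelow.of_not_reachable (ih : K4MinorBelow H)
    (hall : ∀ v ∈ H.support, 3 ≤ (H.neighborSet v).ncard) {v a b c : V} (hva : H.Adj v a)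
    (hvb : H.Adj v b) (hvc : H.Adj v c) (hab : H.Adj a b) (hac : H.Adj a c)
    (hr : ¬ ((H.deleteIncidenceSet v).deleteIncidenceSet a).Reachable b c) : HasK4Minor H := by
  set D := (H.deleteIncidenceSet v).deleteIncidenceSet a
  set t : Set V := {z | D.Reachable b z} ∪ {v, a}
  have hbt : b ∈ t := Or.inl (Reachable.refl b)
  have hvt : v ∈ t := Or.inr (Or.inl rfl)
  have hat : a ∈ t := Or.inr (Or.inr rfl)
  have hct : c ∉ t := by
    rintro (h | h | h)
    · exact hr h
    · exact hvc.ne h.symm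
    · exact hac.ne h.symm
  have hN : ∀ w ∈ t, w ≠ v → w ≠ a → H.neighborSet w ⊆ (H.restrict t).neighborSet w := by
    intro w hw hwv hwa m hm
    refine ⟨hm, hw, ?_⟩
    by_cases hmv : m = v
    · exact hmv ▸ hvt
    by_cases hma : m = a
    · exact hma ▸ hat
    have hbw : D.Reachable b w := by
      rcases hw with h | h | h
      · exact h
      · exact absurd h hwv
      · exact absurd h hwa
    exact Or.inl (hbw.trans (Adj.reachable (deleteIncidenceSet_adj.mpr
      ⟨deleteIncidenceSet_adj.mpr ⟨hm, hwv, hmv⟩, hwa, hma⟩)))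
  have hlt : (H.restrict t).support.ncard < H.support.ncard :=
    Set.ncard_lt_ncard ((support_restrict_subset t).trans_ssubset
      ((Set.ssubset_iff_of_subset Set.inter_subset_left).mpr ⟨c, ⟨v, hvc.symm⟩, fun h => hct h.2⟩))
  refine HasK4Minor.mono (restrict_le t) (ih _ v a hlt ⟨fun _ => ⟨⟨hva, hvt, hat⟩, ?_, ?_⟩,
    fun w hw hwv hwa => ?_⟩ ⟨v, a, hva, hvt, hat⟩)
  · exact (Set.one_lt_ncard (Set.toFinite _)).mpr ⟨a, ⟨hva, hvt, hat⟩, b, ⟨hvb, hvt, hbt⟩, hab.ne⟩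
  · exact (Set.one_lt_ncard (Set.toFinite _)).mpr
      ⟨v, ⟨hva.symm, hat, hvt⟩, b, ⟨hab, hat, hbt⟩, hvb.ne⟩
  · obtain ⟨hwH, hwt⟩ := support_restrict_subset t hw
    exact (hall w hwH).trans (Set.ncard_le_ncard (hN w hwt hwv hwa))

/-- A vertex `v` with neighbours `a`, `b`, `c`, where `a` is adjacent to `b` and `c` but `b`, `c`
are not adjacent: either a `b`–`c` path avoiding `v` and `a` completes a `K₄` minor, or `{v, a}`
separates `b` from `c` and the side of `b` is a smaller instance of the induction. -/
lemma K4MinorBelow.of_fan (ih : K4MinorBelow H)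
    (hall : ∀ v ∈ H.support, 3 ≤ (H.neighborSet v).ncard) {v a b c : V} (hva : H.Adj v a)
    (hvb : H.Adj v b) (hvc : H.Adj v c) (hab : H.Adj a b) (hac : H.Adj a c) (hbc : b ≠ c) :
    HasK4Minor H := by
  by_cases hr : ((H.deleteIncidenceSet v).deleteIncidenceSet a).Reachable b c
  · exact hasK4Minor_of_reachable_deleteIncidenceSet hva hvb hvc hab hac hbc hr
  · exact ih.of_not_reachable hall hva hvb hvc hab hac hr

lemma K4MinorBelow.of_three_le (ih : K4MinorBelow H)
    (hall : ∀ v ∈ H.support, 3 ≤ (H.neighborSet v).ncard) (hne : H.support.Nonempty) :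
    HasK4Minor H := by
  by_cases hc : ∃ p q, H.Adj p q ∧ IsContractible H p q
  · obtain ⟨p, q, hpq, hc⟩ := hc
    exact ih.contract hall hpq hc
  push Not at hc
  obtain ⟨v, hv, hv3⟩ := exists_ncard_neighborSet_eq_three hall hne hc
  obtain ⟨a, b, c, hab, hac, hbc, hN⟩ := Set.ncard_eq_three.mp hv3
  have hva : H.Adj v a := show a ∈ H.neighborSet v by simp [hN]
  have hvb : H.Adj v b := show b ∈ H.neighborSet v by simp [hN]
  have hvc : H.Adj v c := show c ∈ H.neighborSet v by simp [hN]
  have hcommon : ∀ u, H.Adj v u → ∃ z, (z = a ∨ z = b ∨ z = c) ∧ H.Adj u z := fun u hu => by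
    obtain ⟨z, hvz, huz⟩ := exists_common_neighbor_of_not_isContractible (hall v hv)
      (hall u ⟨v, hu.symm⟩) (hc v u hu)
    exact ⟨z, by simpa [hN] using (show z ∈ H.neighborSet v from hvz), huz⟩
  have hA : H.Adj a b ∨ H.Adj a c := by
    obtain ⟨z, rfl | rfl | rfl, hz⟩ := hcommon a hva
    exacts [absurd hz (H.irrefl), Or.inl hz, Or.inr hz]
  have hB : H.Adj b a ∨ H.Adj b c := by
    obtain ⟨z, rfl | rfl | rfl, hz⟩ := hcommon b hvb
    exacts [Or.inl hz, absurd hz (H.irrefl), Or.inr hz]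
  have hC : H.Adj c a ∨ H.Adj c b := by
    obtain ⟨z, rfl | rfl | rfl, hz⟩ := hcommon c hvc
    exacts [Or.inl hz, Or.inr hz, absurd hz (H.irrefl)]
  by_cases hbc' : H.Adj b c
  · by_cases hac' : H.Adj a c
    · by_cases hab' : H.Adj a b
      · have hT : (H.induce {c}).Connected := by
          rw [induce_singleton_eq_top]
          exact connected_top
        exact hasK4Minor_of_triangle hva hvb hab' hT hvc.ne hac hbc rfl rfl rfl hvc hac' hbc'
      · exact ih.of_fan hall hvc hva hvb hac'.symm hbc'.symm hab
    · exact ih.of_fan hall hvb hva hvc (hA.resolve_right hac').symm hbc' hac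
  · exact ih.of_fan hall hva hvb hvc (hB.resolve_right hbc').symm
      (hC.resolve_right (hbc' ·.symm)).symm hbc

theorem NearlyMinDegreeThree.hasK4Minor {x y : V} (h : NearlyMinDegreeThree H x y)
    (hne : H.support.Nonempty) : HasK4Minor H := by
  induction hn : H.support.ncard using Nat.strong_induction_on generalizing H x y with
  | _ n ih =>
  have ih' : K4MinorBelow H := fun H' x' y' hlt h' hne' => ih _ (hn ▸ hlt) h' hne' rfl
  by_cases hall : ∀ v ∈ H.support, 3 ≤ (H.neighborSet v).ncard
  · exact ih'.of_three_le hall hne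
  push Not at hall
  obtain ⟨v, hv, hv2⟩ := hall
  have hvxy : v = x ∨ v = y := by
    by_contra! hvxy
    exact absurd (h.2 v hv hvxy.1 hvxy.2) (by omega)
  by_cases hxy : x = y
  · subst hxy
    obtain rfl : v = x := hvxy.elim id id
    exact ih'.of_special_self hv (by omega) fun w hw hwv => h.2 w hw hwv hwv
  · rcases hvxy with rfl | rfl
    · exact ih'.of_special_pair hxy h (by omega)
    · exact ih'.of_special_pair (Ne.symm hxy) h.symm (by omega)

theorem exists_mem_support_ncard_neighborSet_le_two (hH : ¬ HasK4Minor H)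
    (hne : H.support.Nonempty) : ∃ v ∈ H.support, (H.neighborSet v).ncard ≤ 2 := by
  by_contra! h
  obtain ⟨v, hv⟩ := hne
  exact hH (NearlyMinDegreeThree.hasK4Minor (x := v) (y := v)
    ⟨fun h => absurd rfl h, fun w hw _ _ => h w hw⟩ ⟨v, hv⟩)

end SimpleGraph

/-! ### Walk lengths in `K(2k+1, k)` -/

open Finset

lemma Finset.exists_card_inter_eq_of_le {α : Type*} [Fintype α] [DecidableEq α]
    (P Q : Finset α) {a b c d : ℕ} (ha : a ≤ #(P ∩ Q)) (hb : b ≤ #(P \ Q)) (hc : c ≤ #(Q \ P))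
    (hd : d ≤ #(P ∪ Q)ᶜ) :
    ∃ X : Finset α, #X = a + b + c + d ∧ #(X ∩ P) = a + b ∧ #(X ∩ Q) = a + c := by
  obtain ⟨A, hA, rfl⟩ := exists_subset_card_eq ha
  obtain ⟨B, hB, rfl⟩ := exists_subset_card_eq hb
  obtain ⟨C, hC, rfl⟩ := exists_subset_card_eq hc
  obtain ⟨D, hD, rfl⟩ := exists_subset_card_eq hd
  simp only [subset_iff, mem_inter, mem_sdiff, mem_compl, mem_union] at hA hB hC hD
  have hXP : (A ∪ B ∪ C ∪ D) ∩ P = A ∪ B := by ext z; simp only [mem_inter, mem_union]; grind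
  have hXQ : (A ∪ B ∪ C ∪ D) ∩ Q = A ∪ C := by ext z; simp only [mem_inter, mem_union]; grind
  refine ⟨A ∪ B ∪ C ∪ D, ?_, ?_, ?_⟩
  · rw [card_union_of_disjoint, card_union_of_disjoint, card_union_of_disjoint] <;>
      simp only [disjoint_left, mem_union] <;> grind
  · rw [hXP, card_union_of_disjoint (disjoint_left.mpr (by grind))]
  · rw [hXQ, card_union_of_disjoint (disjoint_left.mpr (by grind))]

lemma exists_intersection_sizes {k i l₁ h₁ l₂ h₂ : ℕ} (hi : i ≤ k) (hb₁ : l₁ ≤ h₁)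
    (hh₁ : h₁ ≤ k) (hb₂ : l₂ ≤ h₂) (hh₂ : h₂ ≤ k) (hd : i + l₂ ≤ k + h₁) (he : i + l₁ ≤ k + h₂)
    (hf : k ≤ i + h₁ + h₂ + 1) (hg : l₁ + l₂ ≤ k + i) :
    ∃ x y a, l₁ ≤ x ∧ x ≤ h₁ ∧ l₂ ≤ y ∧ y ≤ h₂ ∧ a ≤ i ∧ a ≤ x ∧ a ≤ y ∧
      x + i ≤ a + k ∧ y + i ≤ a + k ∧ x + y ≤ a + k ∧ a + k ≤ x + y + i + 1 := by
  set x := max l₁ (max (l₂ - (k - i)) (k - i - 1 - h₂))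
  set y := max l₂ (max (x - (k - i)) (k - i - 1 - x))
  exact ⟨x, y, max (x + y - k) (max (x - (k - i)) (y - (k - i))), by omega⟩

lemma exists_card_inter_eq_of_card_eq {k : ℕ} {P Q : Finset (Fin (2 * k + 1))} (hP : #P = k)
    (hQ : #Q = k) {x y a : ℕ} (ha : a ≤ #(P ∩ Q)) (hax : a ≤ x) (hay : a ≤ y)
    (hx : x + #(P ∩ Q) ≤ a + k) (hy : y + #(P ∩ Q) ≤ a + k) (hxy : x + y ≤ a + k)
    (hxy' : a + k ≤ x + y + #(P ∩ Q) + 1) :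
    ∃ X : Finset (Fin (2 * k + 1)), #X = k ∧ #(X ∩ P) = x ∧ #(X ∩ Q) = y := by
  have hPQ : #(P ∩ Q) + #(P \ Q) = k := by rw [card_inter_add_card_sdiff, hP]
  have hQP : #(P ∩ Q) + #(Q \ P) = k := by rw [inter_comm, card_inter_add_card_sdiff, hQ]
  have hcompl : #(P ∪ Q)ᶜ + #(P ∪ Q) = 2 * k + 1 := by
    rw [card_compl_add_card, Fintype.card_fin]
  have hunion := card_union_add_card_inter P Q
  obtain ⟨X, hX, hXP, hXQ⟩ := exists_card_inter_eq_of_le P Q (a := a) (b := x - a) (c := y - a)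
    (d := k + a - x - y) ha (by omega) (by omega) (by omega)
  exact ⟨X, by omega, by omega, by omega⟩

/-- In `K(2k+1, k)`, vertices `X` and `Y` are joined by a walk of odd length `2t+1` iff
`#(X ∩ Y) ≤ t`, and by one of even length `2t` iff `k ≤ t + #(X ∩ Y)`. -/
def KneserAdmissible (k : ℕ) {α : Type*} [DecidableEq α] (X Y : Finset α) (ℓ : ℕ) : Prop :=
  (∀ t, ℓ = 2 * t + 1 → #(X ∩ Y) ≤ t) ∧ ∀ t, ℓ = 2 * t → k ≤ t + #(X ∩ Y)

section KneserAdmissible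

variable {α : Type*} [DecidableEq α] {k ℓ : ℕ} {X Y : Finset α}

lemma KneserAdmissible.symm (h : KneserAdmissible k X Y ℓ) : KneserAdmissible k Y X ℓ := by
  rwa [KneserAdmissible, inter_comm]

lemma kneserAdmissible_self (hX : #X = k) (hℓ : ∀ t, ℓ = 2 * t + 1 → k ≤ t) :
    KneserAdmissible k X X ℓ := by
  simp only [KneserAdmissible, inter_self, hX]
  exact ⟨hℓ, fun t _ => Nat.le_add_left k t⟩

lemma KneserAdmissible.disjoint (h : KneserAdmissible k X Y 1) : Disjoint X Y := by
  rw [disjoint_iff_inter_eq_empty, ← card_eq_zero, ← Nat.le_zero]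
  exact h.1 0 rfl

end KneserAdmissible

/-- `X` is admissible to `P` for every length in `S` iff
`k - evenCap k S ≤ #(X ∩ P) ≤ oddCap k S`: only the shortest odd and even lengths matter. -/
noncomputable def oddCap (k : ℕ) (S : Set ℕ) : ℕ := sInf (insert k {t | 2 * t + 1 ∈ S})

noncomputable def evenCap (k : ℕ) (S : Set ℕ) : ℕ := sInf (insert k {t | 2 * t ∈ S})

lemma Nat.sInf_insert_eq_or_mem (k : ℕ) (A : Set ℕ) :
    sInf (insert k A) = k ∨ sInf (insert k A) ∈ A :=
  Nat.sInf_mem (Set.insert_nonempty k A)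

section Caps

variable {k : ℕ} {S : Set ℕ}

lemma oddCap_le : oddCap k S ≤ k := Nat.sInf_le (Set.mem_insert _ _)

lemma evenCap_le : evenCap k S ≤ k := Nat.sInf_le (Set.mem_insert _ _)

lemma oddCap_eq_or_mem : oddCap k S = k ∨ 2 * oddCap k S + 1 ∈ S :=
  Nat.sInf_insert_eq_or_mem _ _

lemma evenCap_eq_or_mem : evenCap k S = k ∨ 2 * evenCap k S ∈ S :=
  Nat.sInf_insert_eq_or_mem _ _

variable {α : Type*} [DecidableEq α]

lemma kneserAdmissible_of_caps {X P : Finset α} (h₁ : #(X ∩ P) ≤ oddCap k S)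
    (h₂ : k ≤ evenCap k S + #(X ∩ P)) {ℓ : ℕ} (hℓ : ℓ ∈ S) : KneserAdmissible k X P ℓ :=
  ⟨fun _ ht => h₁.trans (Nat.sInf_le (Or.inr (show _ ∈ S from ht ▸ hℓ))),
    fun _ ht => h₂.trans (Nat.add_le_add_right (Nat.sInf_le (Or.inr (show _ ∈ S from ht ▸ hℓ))) _)⟩

lemma caps_bounds_of_kneserAdmissible {P Q : Finset α} (hPQ : #(P ∩ Q) ≤ k) {S₁ S₂ : Set ℕ}
    (h : ∀ ℓ₁ ∈ S₁, ∀ ℓ₂ ∈ S₂, KneserAdmissible k P Q (ℓ₁ + ℓ₂)) :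
    #(P ∩ Q) ≤ oddCap k S₁ + evenCap k S₂ ∧ #(P ∩ Q) ≤ evenCap k S₁ + oddCap k S₂ ∧
      k ≤ oddCap k S₁ + oddCap k S₂ + 1 + #(P ∩ Q) ∧
      k ≤ evenCap k S₁ + evenCap k S₂ + #(P ∩ Q) := by
  refine ⟨?_, ?_, ?_, ?_⟩
  · rcases oddCap_eq_or_mem (k := k) (S := S₁) with h₁ | h₁; · omega
    rcases evenCap_eq_or_mem (k := k) (S := S₂) with h₂ | h₂; · omega
    exact (h _ h₁ _ h₂).1 _ (by ring)
  · rcases evenCap_eq_or_mem (k := k) (S := S₁) with h₁ | h₁; · omega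
    rcases oddCap_eq_or_mem (k := k) (S := S₂) with h₂ | h₂; · omega
    exact (h _ h₁ _ h₂).1 _ (by ring)
  · rcases oddCap_eq_or_mem (k := k) (S := S₁) with h₁ | h₁; · omega
    rcases oddCap_eq_or_mem (k := k) (S := S₂) with h₂ | h₂; · omega
    have := (h _ h₁ _ h₂).2 (oddCap k S₁ + oddCap k S₂ + 1) (by ring)
    omega
  · rcases evenCap_eq_or_mem (k := k) (S := S₁) with h₁ | h₁; · omega
    rcases evenCap_eq_or_mem (k := k) (S := S₂) with h₂ | h₂; · omega
    exact (h _ h₁ _ h₂).2 _ (by ring)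

end Caps

theorem exists_kneserAdmissible_extension {k : ℕ} {P Q : Finset (Fin (2 * k + 1))} (hP : #P = k)
    (hQ : #Q = k) {S₁ S₂ : Set ℕ}
    (h₁₁ : ∀ ℓ₁ ∈ S₁, ∀ ℓ₂ ∈ S₁, KneserAdmissible k P P (ℓ₁ + ℓ₂))
    (h₂₂ : ∀ ℓ₁ ∈ S₂, ∀ ℓ₂ ∈ S₂, KneserAdmissible k Q Q (ℓ₁ + ℓ₂))
    (h₁₂ : ∀ ℓ₁ ∈ S₁, ∀ ℓ₂ ∈ S₂, KneserAdmissible k P Q (ℓ₁ + ℓ₂)) :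
    ∃ X : Finset (Fin (2 * k + 1)), #X = k ∧ (∀ ℓ ∈ S₁, KneserAdmissible k X P ℓ) ∧
      ∀ ℓ ∈ S₂, KneserAdmissible k X Q ℓ := by
  have hi : #(P ∩ Q) ≤ k := (card_le_card inter_subset_left).trans hP.le
  obtain ⟨hb₁, -⟩ := caps_bounds_of_kneserAdmissible (by simp [hP]) h₁₁
  obtain ⟨hb₂, -⟩ := caps_bounds_of_kneserAdmissible (by simp [hQ]) h₂₂
  obtain ⟨hd, he, hf, hg⟩ := caps_bounds_of_kneserAdmissible hi h₁₂
  simp only [inter_self, hP, hQ] at hb₁ hb₂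
  have := oddCap_le (k := k) (S := S₁)
  have := oddCap_le (k := k) (S := S₂)
  have := evenCap_le (k := k) (S := S₁)
  have := evenCap_le (k := k) (S := S₂)
  obtain ⟨x, y, a, hx₁, hx₂, hy₁, hy₂, ha, hax, hay, hx, hy, hxy, hxy'⟩ :=
    exists_intersection_sizes (l₁ := k - evenCap k S₁) (h₁ := oddCap k S₁)
      (l₂ := k - evenCap k S₂) (h₂ := oddCap k S₂) hi
      (by omega) oddCap_le (by omega) oddCap_le (by omega) (by omega) (by omega) (by omega)
  obtain ⟨X, hX, hXP, hXQ⟩ := exists_card_inter_eq_of_card_eq hP hQ ha hax hay hx hy hxy hxy'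
  exact ⟨X, hX, fun ℓ => kneserAdmissible_of_caps (by omega) (by omega),
    fun ℓ => kneserAdmissible_of_caps (by omega) (by omega)⟩

lemma Kneser.adj_of_kneserAdmissible_one {k : ℕ} (hk : 1 ≤ k) {X Y : Finset (Fin (2 * k + 1))}
    (hX : #X = k) (hY : #Y = k) (h : KneserAdmissible k X Y 1) :
    (Kneser (2 * k + 1) k).Adj ⟨X, hX⟩ ⟨Y, hY⟩ := by
  refine (fromRel_adj _ _ _).mpr ⟨fun hXY => ?_, Or.inl h.disjoint⟩
  obtain rfl : X = Y := congrArg Subtype.val hXY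
  have := h.disjoint
  rw [disjoint_self_iff_empty] at this
  simp [this] at hX
  omega

/-! ### Length systems -/

namespace SimpleGraph

variable {V : Type*} {G H : SimpleGraph V} {L : V → V → ℕ → Prop} {k : ℕ}

/-- `L a b ℓ` asks for the Kneser images of `a` and `b` to be joined by a walk of length `ℓ`.
Eliminating a vertex of degree at most two replaces its requests by their concatenations. -/
structure IsLengthSystem (G H : SimpleGraph V) (L : V → V → ℕ → Prop) : Prop where
  symm : ∀ {a b ℓ}, L a b ℓ → L b a ℓ
  adj : ∀ {a b ℓ}, L a b ℓ → H.Adj a b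
  exists_walk : ∀ {a b ℓ}, L a b ℓ → ∃ w : G.Walk a b, w.length = ℓ

def eliminateLengths (L : V → V → ℕ → Prop) (v a b : V) (ℓ : ℕ) : Prop :=
  (L a b ℓ ∧ a ≠ v ∧ b ≠ v) ∨ (a ≠ b ∧ ∃ ℓ₁ ℓ₂, L v a ℓ₁ ∧ L v b ℓ₂ ∧ ℓ = ℓ₁ + ℓ₂)

namespace IsLengthSystem

lemma eliminate (hL : IsLengthSystem G H L) (v : V) :
    IsLengthSystem G (H.eliminate v) (eliminateLengths L v) where
  symm := by
    rintro a b ℓ (⟨h, ha, hb⟩ | ⟨hab, ℓ₁, ℓ₂, h₁, h₂, rfl⟩)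
    · exact Or.inl ⟨hL.symm h, hb, ha⟩
    · exact Or.inr ⟨hab.symm, ℓ₂, ℓ₁, h₂, h₁, add_comm _ _⟩
  adj := by
    rintro a b ℓ (⟨h, ha, hb⟩ | ⟨hab, ℓ₁, ℓ₂, h₁, h₂, rfl⟩)
    · exact eliminate_adj.mpr (Or.inl ⟨hL.adj h, ha, hb⟩)
    · exact eliminate_adj.mpr (Or.inr ⟨hab, hL.adj h₁, hL.adj h₂⟩)
  exists_walk := by
    rintro a b ℓ (⟨h, -, -⟩ | ⟨-, ℓ₁, ℓ₂, h₁, h₂, rfl⟩)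
    · exact hL.exists_walk h
    · obtain ⟨w₁, rfl⟩ := hL.exists_walk h₁
      obtain ⟨w₂, rfl⟩ := hL.exists_walk h₂
      exact ⟨w₁.reverse.append w₂, by simp⟩

lemma kneserAdmissible_self (hL : IsLengthSystem G H L) (hG : oddGirthAtLeast G (2 * k + 1))
    {P : Finset (Fin (2 * k + 1))} (hP : #P = k) {v a : V} {ℓ₁ ℓ₂ : ℕ} (h₁ : L v a ℓ₁)
    (h₂ : L v a ℓ₂) : KneserAdmissible k P P (ℓ₁ + ℓ₂) := by
  refine _root_.kneserAdmissible_self hP fun t ht => ?_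
  obtain ⟨w₁, rfl⟩ := hL.exists_walk h₁
  obtain ⟨w₂, rfl⟩ := hL.exists_walk h₂
  have := hG.le_length_of_odd (w₁.append w₂.reverse) (by simp [ht])
  simp only [Walk.length_append, Walk.length_reverse] at this
  omega

lemma exists_of_eliminate (hL : IsLengthSystem G H L) (hG : oddGirthAtLeast G (2 * k + 1))
    {v p q : V} (hN : ∀ b, H.Adj v b → b = p ∨ b = q) {φ : V → Finset (Fin (2 * k + 1))}
    (hφ : ∀ u, #(φ u) = k)
    (hφL : ∀ a b ℓ, eliminateLengths L v a b ℓ → KneserAdmissible k (φ a) (φ b) ℓ) :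
    ∃ ψ : V → Finset (Fin (2 * k + 1)), (∀ u, #(ψ u) = k) ∧
      ∀ a b ℓ, L a b ℓ → KneserAdmissible k (ψ a) (ψ b) ℓ := by
  classical
  have hpq : ∀ ℓ₁ ∈ {ℓ | L v p ℓ}, ∀ ℓ₂ ∈ {ℓ | L v q ℓ},
      KneserAdmissible k (φ p) (φ q) (ℓ₁ + ℓ₂) := by
    intro ℓ₁ h₁ ℓ₂ h₂
    by_cases hpq : p = q
    · subst hpq
      exact hL.kneserAdmissible_self hG (hφ p) h₁ h₂
    · exact hφL p q _ (Or.inr ⟨hpq, ℓ₁, ℓ₂, h₁, h₂, rfl⟩)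
  obtain ⟨X, hX, hXp, hXq⟩ := exists_kneserAdmissible_extension (hφ p) (hφ q)
    (fun _ h₁ _ h₂ => hL.kneserAdmissible_self hG (hφ p) h₁ h₂)
    (fun _ h₁ _ h₂ => hL.kneserAdmissible_self hG (hφ q) h₁ h₂) hpq
  have hv : ∀ b ℓ, L v b ℓ → KneserAdmissible k X (Function.update φ v X b) ℓ := by
    intro b ℓ h
    have hb := hL.adj h
    rw [Function.update_of_ne hb.ne']
    rcases hN b hb with rfl | rfl
    exacts [hXp ℓ h, hXq ℓ h]
  refine ⟨Function.update φ v X, fun u => ?_, fun a b ℓ h => ?_⟩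
  · by_cases hu : u = v
    · subst hu
      simpa using hX
    · rw [Function.update_of_ne hu]
      exact hφ u
  · by_cases ha : a = v
    · subst ha
      simpa using hv b ℓ h
    by_cases hb : b = v
    · subst hb
      simpa using (hv a ℓ (hL.symm h)).symm
    · rw [Function.update_of_ne ha, Function.update_of_ne hb]
      exact hφL a b ℓ (Or.inl ⟨h, ha, hb⟩)

theorem exists_kneserAdmissible [Finite V] (hG : oddGirthAtLeast G (2 * k + 1))
    (hH : ¬ HasK4Minor H) (hL : IsLengthSystem G H L) :
    ∃ φ : V → Finset (Fin (2 * k + 1)), (∀ u, #(φ u) = k) ∧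
      ∀ a b ℓ, L a b ℓ → KneserAdmissible k (φ a) (φ b) ℓ := by
  induction hn : H.support.ncard using Nat.strong_induction_on generalizing H L with
  | _ n ih =>
  rcases H.support.eq_empty_or_nonempty with hemp | hne
  · obtain ⟨X, -, hX⟩ := exists_subset_card_eq (s := (univ : Finset (Fin (2 * k + 1)))) (n := k)
      (by simp; omega)
    refine ⟨fun _ => X, fun _ => hX, fun a b ℓ h => ?_⟩
    exact absurd (show a ∈ H.support from ⟨b, hL.adj h⟩) (hemp ▸ Set.notMem_empty a)
  obtain ⟨v, hv, hv2⟩ := exists_mem_support_ncard_neighborSet_le_two hH hne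
  obtain ⟨p, -, q, -, hN⟩ := Set.exists_subset_pair_of_ncard_le_two (s := H.neighborSet v) hv hv2
  obtain ⟨φ, hφ, hφL⟩ := ih _ (hn ▸ support_ncard_lt_of_subset_diff hv (support_eliminate_subset v))
    (fun h => hH (h.of_eliminate hN)) (hL.eliminate v) rfl
  exact hL.exists_of_eliminate hG hN hφ hφL

end IsLengthSystem

end SimpleGraph

/-- Every finite `K₄`-minor-free graph of odd-girth at least `2k+1` admits a
homomorphism to the Kneser graph `K(2k+1, k)`. -/
theorem SP_to_Kneser {V : Type*} [Fintype V] (k : ℕ) (hk : 1 ≤ k) (G : SimpleGraph V)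
    (h1 : ¬ HasK4Minor G) (h2 : oddGirthAtLeast G (2*k+1)) :
    Nonempty (G →g Kneser (2*k+1) k) := by
  have hL : G.IsLengthSystem G fun a b ℓ => G.Adj a b ∧ ℓ = 1 :=
    ⟨fun h => ⟨h.1.symm, h.2⟩, fun h => h.1, fun h => ⟨h.1.toWalk, by simp [h.2]⟩⟩
  obtain ⟨φ, hφ, hφL⟩ := hL.exists_kneserAdmissible h2 h1
  exact ⟨⟨fun v => ⟨φ v, hφ v⟩, fun {a b} hab =>
    Kneser.adj_of_kneserAdmissible_one hk (hφ a) (hφ b) (hφL a b 1 ⟨hab, rfl⟩)⟩⟩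
end
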